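/- arXiv:2111.13523 — 11 statements merged into one kernel-verified Lean document; each statement's English description precedes it below -/
import Mathlib

section
/- Let Σ = {a_1,…,a_k} be a finite alphabet and L ⊆ Σ* a commutative regular language. Then the following are equivalent: (i) the number of equivalence classes of the Nerode right-congruence ≡_L equals the product over j = 1,…,k of the number of distinct classes among { [a_j^m]_{≡_L} : m ∈ ℕ }; (ii) for all words u, v ∈ Σ*, u ≡_L v implies a_j^{|u|_{a_j}} ≡_L a_j^{|v|_{a_j}} for every j ∈ {1,…,k}; (iii) for all words u, v ∈ Σ*, u ≡_L v holds if and only if a_j^{|u|_{a_j}} ≡_L a_j^{|v|_{a_j}} for every j ∈ {1,…,k}. -/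
/-- The Nerode right-congruence of a language `L`: `u ≡_L v` iff
for all words `x`, `u ++ x ∈ L ↔ v ++ x ∈ L`. -/
def NerodeEq {α : Type*} (L : Set (List α)) (u v : List α) : Prop :=
  ∀ x : List α, u ++ x ∈ L ↔ v ++ x ∈ L

/-- The Nerode right-congruence as a setoid on words. -/
def nerodeSetoid {α : Type*} (L : Set (List α)) : Setoid (List α) where
  r := NerodeEq L
  iseqv := ⟨fun _ _ => Iff.rfl, fun h x => (h x).symm, fun h1 h2 x => (h1 x).trans (h2 x)⟩

/-- A language is regular iff its Nerode right-congruence has finitely many classes. -/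
def RegularLang {α : Type*} (L : Set (List α)) : Prop :=
  Finite (Quotient (nerodeSetoid L))

/-- The state complexity of `L`: the number of Nerode right-congruence classes. -/
noncomputable def sc {α : Type*} (L : Set (List α)) : ℕ :=
  Nat.card (Quotient (nerodeSetoid L))

/-- A language is commutative if membership only depends on the number of
occurrences of each letter. -/
def CommutativeLang {α : Type*} [DecidableEq α] (L : Set (List α)) : Prop :=
  ∀ u v : List α, (∀ x : α, u.count x = v.count x) → (u ∈ L ↔ v ∈ L)

/-- A (commutative) language has a product-form minimal automaton iff for all words
`u, v`: `u ≡_L v` holds if and only if `x^{|u|_x} ≡_L x^{|v|_x}` for every letter `x`. -/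
def HasProductForm {α : Type*} [DecidableEq α] (L : Set (List α)) : Prop :=
  ∀ u v : List α,
    NerodeEq L u v ↔
      ∀ x : α, NerodeEq L (List.replicate (u.count x) x) (List.replicate (v.count x) x)

/-!
Send a word `u` to its profile `([a^{|u|_a}])_a`, a tuple of classes of letter powers. Every
tuple of such classes is the profile of a word, and in a commutative language a word is
equivalent to the product of its letter powers, so words with equal profiles are Nerode
equivalent. Thus the Nerode quotient is a quotient of the finite set of profiles, and the two
have the same size exactly when Nerode equivalence determines the profile, which is (ii). For
the same reason the converse of (ii) always holds, giving (ii) ⇔ (iii).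
-/

theorem Nat.card_eq_card_iff_factorsThrough {X A B : Type*} [Finite B] {f : X → A} {g : X → B}
    (hf : Function.Surjective f) (hg : Function.Surjective g) (hfg : f.FactorsThrough g) :
    Nat.card A = Nat.card B ↔ g.FactorsThrough f := by
  set h : B → A := f ∘ Function.surjInv hg
  have hhg : ∀ x, h (g x) = f x := fun x => hfg (Function.surjInv_eq hg (g x))
  have hh : Function.Surjective h := fun a => by
    obtain ⟨x, rfl⟩ := hf a
    exact ⟨g x, hhg x⟩
  rw [eq_comm, ← (Nat.bijective_iff_surjective_and_card h).trans (and_iff_right hh),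
    Function.Bijective, and_iff_left hh]
  refine ⟨fun hinj x y hxy => hinj (by rw [hhg, hhg, hxy]), fun hgf b b' hbb' => ?_⟩
  rw [← Function.surjInv_eq hg b, ← Function.surjInv_eq hg b']
  exact hgf hbb'

section PowerWord

variable {α : Type*} [Fintype α] [DecidableEq α]

noncomputable def powerWord (m : α → ℕ) : List α :=
  (Finset.univ : Finset α).toList.flatMap fun a => List.replicate (m a) a

@[simp]
theorem count_powerWord (m : α → ℕ) (a : α) : (powerWord m).count a = m a := by
  simp [powerWord, List.count_flatMap, List.count_replicate]

end PowerWord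

section Nerode

variable {α : Type*} {L : Set (List α)} {u v w : List α}

theorem NerodeEq.trans (h₁ : NerodeEq L u v) (h₂ : NerodeEq L v w) : NerodeEq L u w :=
  fun x => (h₁ x).trans (h₂ x)

theorem NerodeEq.append_right (h : NerodeEq L u v) (w : List α) :
    NerodeEq L (u ++ w) (v ++ w) := fun x => by
  simpa only [List.append_assoc] using h (w ++ x)

theorem nerodeClass_eq_iff : (⟦u⟧ : Quotient (nerodeSetoid L)) = ⟦v⟧ ↔ NerodeEq L u v :=
  Quotient.eq

namespace CommutativeLang

variable [DecidableEq α]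

theorem nerodeEq_of_count_eq (hL : CommutativeLang L) (h : ∀ a, u.count a = v.count a) :
    NerodeEq L u v := fun x =>
  hL (u ++ x) (v ++ x) fun a => by simp only [List.count_append, h a]

theorem nerodeEq_append_left (hL : CommutativeLang L) (h : NerodeEq L u v) (w : List α) :
    NerodeEq L (w ++ u) (w ++ v) :=
  have swap (u : List α) : NerodeEq L (w ++ u) (u ++ w) :=
    hL.nerodeEq_of_count_eq fun a => by simp only [List.count_append, Nat.add_comm]
  ((swap u).trans (h.append_right w)).trans fun x => (swap v x).symm

theorem nerodeEq_flatMap_replicate (hL : CommutativeLang L) {m m' : α → ℕ} :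
    ∀ l : List α, (∀ a ∈ l, NerodeEq L (List.replicate (m a) a) (List.replicate (m' a) a)) →
      NerodeEq L (l.flatMap fun a => List.replicate (m a) a)
        (l.flatMap fun a => List.replicate (m' a) a)
  | [], _ => fun _ => Iff.rfl
  | a :: l, h => by
    simp only [List.flatMap_cons]
    exact ((h a List.mem_cons_self).append_right _).trans <| hL.nerodeEq_append_left
      (nerodeEq_flatMap_replicate hL l fun b hb => h b (List.mem_cons_of_mem a hb)) _

variable [Fintype α]

theorem nerodeEq_of_forall_replicate (hL : CommutativeLang L)
    (h : ∀ a, NerodeEq L (List.replicate (u.count a) a) (List.replicate (v.count a) a)) :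
    NerodeEq L u v :=
  have hu : NerodeEq L u (powerWord fun a => u.count a) :=
    hL.nerodeEq_of_count_eq fun a => (count_powerWord (fun b => u.count b) a).symm
  have hv : NerodeEq L (powerWord fun a => v.count a) v :=
    hL.nerodeEq_of_count_eq fun a => count_powerWord (fun b => v.count b) a
  (hu.trans (hL.nerodeEq_flatMap_replicate _ fun a _ => h a)).trans hv

theorem hasProductForm_iff (hL : CommutativeLang L) :
    (∀ u v : List α, NerodeEq L u v →
      ∀ a, NerodeEq L (List.replicate (u.count a) a) (List.replicate (v.count a) a)) ↔
      HasProductForm L :=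
  ⟨fun h u v => ⟨h u v, hL.nerodeEq_of_forall_replicate⟩, fun h u v => (h u v).mp⟩

end CommutativeLang

end Nerode

section PowerProfile

variable {α : Type*} [DecidableEq α] (L : Set (List α))

def powerClasses (a : α) : Set (Quotient (nerodeSetoid L)) :=
  Set.range fun m : ℕ => ⟦List.replicate m a⟧

def powerProfile (u : List α) (a : α) : powerClasses L a :=
  ⟨⟦List.replicate (u.count a) a⟧, u.count a, rfl⟩

variable {L}

theorem powerProfile_eq_iff {u v : List α} :
    powerProfile L u = powerProfile L v ↔
      ∀ a, NerodeEq L (List.replicate (u.count a) a) (List.replicate (v.count a) a) := by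
  simp only [funext_iff, Subtype.ext_iff, powerProfile, nerodeClass_eq_iff]

theorem powerProfile_factorsThrough_iff :
    (powerProfile L).FactorsThrough (Quotient.mk (nerodeSetoid L)) ↔
      ∀ u v : List α, NerodeEq L u v →
        ∀ a, NerodeEq L (List.replicate (u.count a) a) (List.replicate (v.count a) a) := by
  simp only [Function.FactorsThrough, Quotient.eq_iff_equiv, powerProfile_eq_iff]
  rfl

theorem powerProfile_surjective [Fintype α] : Function.Surjective (powerProfile L) := by
  intro c
  choose m hm using fun a => (c a).2
  refine ⟨powerWord m, funext fun a => Subtype.ext ?_⟩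
  simp only [powerProfile, count_powerWord, hm]

theorem CommutativeLang.factorsThrough_powerProfile [Fintype α] (hL : CommutativeLang L) :
    (Quotient.mk (nerodeSetoid L)).FactorsThrough (powerProfile L) := fun _ _ h =>
  Quotient.sound (hL.nerodeEq_of_forall_replicate (powerProfile_eq_iff.mp h))

end PowerProfile

/-- Characterizations of commutative regular languages whose minimal automaton has
product-form (Theorem 2 of the paper): for a commutative regular language `L` over
`Σ = {a_1, …, a_k}`, the following are equivalent: (i) the number of Nerode classes of `L`
equals the product over the letters `j` of the number of classes of the form
`[a_j^m]`; (ii) `u ≡_L v` implies `a_j^{|u|_{a_j}} ≡_L a_j^{|v|_{a_j}}` for all `j`;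
(iii) `u ≡_L v` iff `a_j^{|u|_{a_j}} ≡_L a_j^{|v|_{a_j}}` for all `j`. -/
theorem stmt0 (k : ℕ) (L : Set (List (Fin k)))
    (hcomm : CommutativeLang L) (hreg : RegularLang L) :
    ((sc L = ∏ j : Fin k,
        Nat.card (Set.range fun m : ℕ => (⟦List.replicate m j⟧ : Quotient (nerodeSetoid L))))
      ↔ (∀ u v : List (Fin k), NerodeEq L u v →
          ∀ j : Fin k,
            NerodeEq L (List.replicate (u.count j) j) (List.replicate (v.count j) j)))
    ∧
    ((∀ u v : List (Fin k), NerodeEq L u v →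
          ∀ j : Fin k,
            NerodeEq L (List.replicate (u.count j) j) (List.replicate (v.count j) j))
      ↔ HasProductForm L) := by
  have : Finite (Quotient (nerodeSetoid L)) := hreg
  refine ⟨?_, hcomm.hasProductForm_iff⟩
  rw [sc, ← Nat.card_pi, ← powerProfile_factorsThrough_iff]
  exact Nat.card_eq_card_iff_factorsThrough Quotient.mk_surjective powerProfile_surjective
    hcomm.factorsThrough_powerProfile
end

section
/- Let Σ = {a_1,…,a_k} and let p, q be coprime positive integers. Define U = { w ∈ Σ* : |w|_{a_j} ≡ p−1 (mod p) for all j ∈ {1,…,k} } and V = { w ∈ Σ* : |w|_{a_j} ≡ q−1 (mod q) for all j ∈ {1,…,k} }. Then U and V are commutative regular languages with product-form minimal automata, sc(U) = p^k, sc(V) = q^k, the shuffle U ⧢ V has a product-form minimal automaton, and sc(U ⧢ V) = p^k · q^k. Hence the lower bound sc(U)·sc(V) for the state complexity of shuffle on this class is attained. -/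
/-- `IsShuffleOf u v w` holds iff `w` is an interleaving `x₁y₁x₂y₂⋯xₙyₙ`
with `u = x₁⋯xₙ` and `v = y₁⋯yₙ`. -/
inductive IsShuffleOf {α : Type*} : List α → List α → List α → Prop
  | nil : IsShuffleOf [] [] []
  | left {u v w : List α} {a : α} : IsShuffleOf u v w → IsShuffleOf (a :: u) v (a :: w)
  | right {u v w : List α} {a : α} : IsShuffleOf u v w → IsShuffleOf u (a :: v) (a :: w)

/-- The shuffle of two languages. -/
def shuffleLang {α : Type*} (U V : Set (List α)) : Set (List α) :=
  {w | ∃ u ∈ U, ∃ v ∈ V, IsShuffleOf u v w}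

/-!
All three languages are letterwise: `w` belongs to them iff `f (|w|_a)` holds for every letter `a`,
for a predicate `f` on ℕ; for the shuffle, `f n` says that `n = m + (n - m)` with
`m ≡ -1 (mod p)` and `n - m ≡ -1 (mod q)`. Since the letters can be padded independently, two
words are Nerode-equivalent for a letterwise language iff their counts of each letter are
equivalent for the one-letter relation `m ∼ n :⟺ ∀ t, f (m + t) ↔ f (n + t)`. So the Nerode
classes are tuples of `∼`-classes, which is the product form, and `sc = N ^ k` when `∼` has
`N` classes. For `U` these classes are the residues mod `p`. For the shuffle, every `n ≥ pq - 1`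
is accepted by the Chinese remainder theorem, while `pq - 2` is rejected since it would force
`pq ∣ m + 1` with `0 < m + 1 < pq`; so the classes are `{0}, …, {pq - 2}, [pq - 1, ∞)`.
-/

section Letterwise

variable {α : Type*} [DecidableEq α]

def letterwiseLang (f : ℕ → Prop) : Set (List α) :=
  {w | ∀ a, f (w.count a)}

theorem commutativeLang_letterwiseLang (f : ℕ → Prop) :
    CommutativeLang (letterwiseLang f : Set (List α)) := fun _ _ h =>
  forall_congr' fun a => by rw [h a]

theorem IsShuffleOf.count_eq {u v w : List α} (h : IsShuffleOf u v w) (a : α) :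
    w.count a = u.count a + v.count a := by
  induction h with
  | nil => rfl
  | left _ ih => simp only [List.count_cons, ih]; omega
  | right _ ih => simp only [List.count_cons, ih]; omega

theorem exists_isShuffleOf_count_eq (w : List α) (c : α → ℕ) (hc : ∀ a, c a ≤ w.count a) :
    ∃ u v, IsShuffleOf u v w ∧ ∀ a, u.count a = c a := by
  induction w generalizing c with
  | nil => exact ⟨[], [], .nil, fun a => by simpa using ((hc a).antisymm (Nat.zero_le _)).symm⟩
  | cons b w ih =>
    by_cases hcb : c b = 0
    · obtain ⟨u, v, hs, hu⟩ := ih c fun a => by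
        rcases eq_or_ne b a with rfl | hba
        · omega
        · simpa [List.count_cons_of_ne hba] using hc a
      exact ⟨u, b :: v, .right hs, hu⟩
    · obtain ⟨u, v, hs, hu⟩ := ih (Function.update c b (c b - 1)) fun a => by
        rcases eq_or_ne b a with rfl | hba
        · have := hc b
          rw [List.count_cons_self] at this
          rw [Function.update_self]
          omega
        · simpa [List.count_cons_of_ne hba, Ne.symm hba] using hc a
      refine ⟨b :: u, v, .left hs, fun a => ?_⟩
      rcases eq_or_ne b a with rfl | hba
      · rw [List.count_cons_self, hu, Function.update_self]
        omega
      · rw [List.count_cons_of_ne hba, hu, Function.update_of_ne (Ne.symm hba)]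

theorem shuffleLang_letterwiseLang (f g : ℕ → Prop) :
    shuffleLang (letterwiseLang f) (letterwiseLang g) =
      (letterwiseLang (fun n => ∃ m ≤ n, f m ∧ g (n - m)) : Set (List α)) := by
  ext w
  constructor
  · rintro ⟨u, hu, v, hv, hs⟩ a
    refine ⟨u.count a, ?_, hu a, ?_⟩ <;> rw [hs.count_eq]
    · omega
    · simpa using hv a
  · intro h
    choose m hmw hf hg using h
    obtain ⟨u, v, hs, hu⟩ := exists_isShuffleOf_count_eq w m hmw
    have hv : ∀ a, v.count a = w.count a - m a := fun a => by rw [hs.count_eq, hu]; omega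
    exact ⟨u, fun a => by simpa [letterwiseLang, hu] using hf a,
      v, fun a => by simpa [letterwiseLang, hv] using hg a, hs⟩

theorem hasProductForm_of_nerodeEq_iff {β : Type*} {L : Set (List α)} (g : ℕ → β)
    (hL : ∀ u v, NerodeEq L u v ↔ ∀ a, g (u.count a) = g (v.count a)) : HasProductForm L := by
  intro u v
  simp only [hL, List.count_replicate, beq_iff_eq]
  refine ⟨fun h a b => ?_, fun h a => by simpa using h a a⟩
  split_ifs
  · subst_vars; exact h _
  · rfl

variable [Fintype α]

theorem exists_count_eq (c : α → ℕ) : ∃ w : List α, ∀ a, w.count a = c a :=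
  ⟨Finset.univ.toList.flatMap fun b => List.replicate (c b) b, fun a => by
    simp [List.count_flatMap, Function.comp_def, List.count_replicate, Finset.sum_map_toList]⟩

theorem nerodeEq_letterwiseLang_iff {f : ℕ → Prop} (hf : ∀ m, ∃ s, f (m + s)) (u v : List α) :
    NerodeEq (letterwiseLang f) u v ↔ ∀ a t, (f (u.count a + t) ↔ f (v.count a + t)) := by
  have key : ∀ u v : List α, NerodeEq (letterwiseLang f) u v →
      ∀ a t, f (u.count a + t) → f (v.count a + t) := by
    intro u v h a t hu
    choose s hs using hf
    obtain ⟨x, hx⟩ := exists_count_eq fun b => if b = a then t else s (u.count b)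
    have hux : u ++ x ∈ letterwiseLang f := fun b => by
      rw [List.count_append, hx]
      split_ifs with hba
      · exact hba ▸ hu
      · exact hs _
    simpa [List.count_append, hx] using (h x).1 hux a
  refine ⟨fun h a t => ⟨key u v h a t, key v u (fun x => (h x).symm) a t⟩, fun h x => ?_⟩
  simp only [letterwiseLang, Set.mem_ofPred_eq, List.count_append]
  exact forall_congr' fun a => h a _

noncomputable def quotientNerodeEquivOfCount {β : Type*} {L : Set (List α)} (g : ℕ → β)
    (hg : Function.Surjective g)
    (hL : ∀ u v, NerodeEq L u v ↔ ∀ a, g (u.count a) = g (v.count a)) :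
    Quotient (nerodeSetoid L) ≃ (α → β) :=
  (Quotient.congrRight (r := nerodeSetoid L) (r' := Setoid.ker fun w a => g (w.count a))
      fun u v => (hL u v).trans funext_iff.symm).trans <|
    Setoid.quotientKerEquivOfSurjective _ fun c => by
      choose n hn using fun a => hg (c a)
      obtain ⟨w, hw⟩ := exists_count_eq n
      exact ⟨w, funext fun a => by simp only [hw, hn]⟩

theorem letterwiseLang_regular_hasProductForm_sc {β : Type*} [Finite β] {f : ℕ → Prop}
    (hf : ∀ m, ∃ s, f (m + s)) (g : ℕ → β) (hg : Function.Surjective g)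
    (hgf : ∀ m n, g m = g n ↔ ∀ t, (f (m + t) ↔ f (n + t))) :
    RegularLang (letterwiseLang f : Set (List α)) ∧
      HasProductForm (letterwiseLang f : Set (List α)) ∧
      sc (letterwiseLang f : Set (List α)) = Nat.card β ^ Fintype.card α := by
  have hL : ∀ u v : List α,
      NerodeEq (letterwiseLang f) u v ↔ ∀ a, g (u.count a) = g (v.count a) :=
    fun u v => by simp only [nerodeEq_letterwiseLang_iff hf, hgf]
  have e := quotientNerodeEquivOfCount g hg hL
  exact ⟨Finite.of_equiv _ e.symm, hasProductForm_of_nerodeEq_iff g hL,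
    by rw [sc, Nat.card_congr e, Nat.card_fun, Nat.card_eq_fintype_card (α := α)]⟩

end Letterwise

section Arithmetic

variable {p q : ℕ}

theorem forall_add_iff_iff_min_eq {f : ℕ → Prop} {N : ℕ} (hge : ∀ n, N ≤ n → f n)
    (hN : N ≠ 0 → ¬ f (N - 1)) (m n : ℕ) :
    (∀ t, (f (m + t) ↔ f (n + t))) ↔ min m N = min n N := by
  refine ⟨fun h => ?_, fun h t => ?_⟩
  · by_contra hne
    wlog hlt : min m N < min n N generalizing m n
    · exact this n m (fun t => (h t).symm) (Ne.symm hne) (by omega)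
    have hm := (h (N - 1 - m)).2 (hge _ (by omega))
    rw [show m + (N - 1 - m) = N - 1 by omega] at hm
    exact hN (by omega) hm
  · rcases eq_or_ne m n with rfl | hmn
    · rfl
    · exact iff_of_true (hge _ (by omega)) (hge _ (by omega))

theorem mod_eq_sub_one_iff_natCast_eq_neg_one (hp : 0 < p) (n : ℕ) :
    n % p = p - 1 ↔ (n : ZMod p) = -1 := by
  rw [← Nat.mod_eq_of_lt (Nat.sub_lt hp one_pos), ← ZMod.natCast_eq_natCast_iff',
    Nat.cast_pred hp, ZMod.natCast_self, zero_sub]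

theorem mod_eq_sub_one_iff_dvd (hp : 0 < p) (n : ℕ) : n % p = p - 1 ↔ p ∣ n + 1 := by
  rw [mod_eq_sub_one_iff_natCast_eq_neg_one hp, ← ZMod.natCast_eq_zero_iff, Nat.cast_add,
    Nat.cast_one, eq_neg_iff_add_eq_zero]

theorem exists_add_mod_eq_sub_one (hp : 0 < p) (m : ℕ) : ∃ s, (m + s) % p = p - 1 := by
  have := NeZero.of_pos hp
  refine ⟨(-1 - m : ZMod p).val, ?_⟩
  rw [mod_eq_sub_one_iff_natCast_eq_neg_one hp]
  push_cast [ZMod.natCast_zmod_val]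
  ring

theorem forall_add_mod_eq_sub_one_iff (hp : 0 < p) (m n : ℕ) :
    (∀ t, ((m + t) % p = p - 1 ↔ (n + t) % p = p - 1)) ↔ (m : ZMod p) = n := by
  have := NeZero.of_pos hp
  simp only [mod_eq_sub_one_iff_natCast_eq_neg_one hp, Nat.cast_add]
  refine ⟨fun h => ?_, fun h t => by rw [h]⟩
  have hn := (h (-1 - m : ZMod p).val).1 (by rw [ZMod.natCast_zmod_val]; ring)
  rw [ZMod.natCast_zmod_val] at hn
  linear_combination -hn

theorem exists_mod_eq_sub_one_of_le (hp : 0 < p) (hq : 0 < q) (hpq : p.Coprime q) {n : ℕ}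
    (hn : p * q - 1 ≤ n) : ∃ m ≤ n, m % p = p - 1 ∧ (n - m) % q = q - 1 := by
  set c := Nat.chineseRemainder hpq (p - 1) (n + 1)
  have hc : (c : ℕ) < p * q := Nat.chineseRemainder_lt_mul hpq _ _ hp.ne' hq.ne'
  refine ⟨c, by omega, ?_, ?_⟩
  · rw [c.2.1, Nat.mod_eq_of_lt (by omega)]
  · rw [mod_eq_sub_one_iff_dvd hq, show n - c + 1 = n + 1 - c by omega]
    exact (Nat.modEq_iff_dvd' (by omega)).1 c.2.2

theorem not_exists_mod_eq_sub_one (hp : 0 < p) (hq : 0 < q) (hpq : p.Coprime q)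
    (h2 : 2 ≤ p * q) : ¬ ∃ m ≤ p * q - 2, m % p = p - 1 ∧ (p * q - 2 - m) % q = q - 1 := by
  rintro ⟨m, hm, hmp, hmq⟩
  rw [mod_eq_sub_one_iff_dvd hp] at hmp
  rw [mod_eq_sub_one_iff_dvd hq, show p * q - 2 - m + 1 = p * q - (m + 1) by omega,
    Nat.dvd_sub_iff_right (by omega) (dvd_mul_left q p)] at hmq
  have := Nat.le_of_dvd (by omega) (hpq.mul_dvd_of_dvd_of_dvd hmp hmq)
  omega

end Arithmetic

section Applications

variable {α : Type*} [DecidableEq α] [Fintype α]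

theorem letterwiseLang_mod_regular_hasProductForm_sc {p : ℕ} (hp : 0 < p) :
    RegularLang (letterwiseLang (α := α) (· % p = p - 1)) ∧
      HasProductForm (letterwiseLang (α := α) (· % p = p - 1)) ∧
      sc (letterwiseLang (α := α) (· % p = p - 1)) = p ^ Fintype.card α := by
  have := NeZero.of_pos hp
  simpa only [Nat.card_zmod] using letterwiseLang_regular_hasProductForm_sc
    (exists_add_mod_eq_sub_one hp) (Nat.cast : ℕ → ZMod p) ZMod.natCast_zmod_surjective
    fun m n => (forall_add_mod_eq_sub_one_iff hp m n).symm

theorem letterwiseLang_regular_hasProductForm_sc_of_threshold {f : ℕ → Prop} {N : ℕ}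
    (hge : ∀ n, N ≤ n → f n) (hN : N ≠ 0 → ¬ f (N - 1)) :
    RegularLang (letterwiseLang f : Set (List α)) ∧
      HasProductForm (letterwiseLang f : Set (List α)) ∧
      sc (letterwiseLang f : Set (List α)) = (N + 1) ^ Fintype.card α := by
  simpa only [Nat.card_fin] using letterwiseLang_regular_hasProductForm_sc
    (fun m => ⟨N, hge _ (Nat.le_add_left N m)⟩) (fun n => (⟨min n N, by omega⟩ : Fin (N + 1)))
    (fun b => ⟨b, Fin.ext (min_eq_left (Nat.le_of_lt_succ b.2))⟩)
    fun m n => Fin.ext_iff.trans (forall_add_iff_iff_min_eq hge hN m n).symm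

end Applications

/-- For coprime `p, q > 0`, the languages `U = {w : |w|_{a_j} ≡ p-1 (mod p) for all j}` and
`V = {w : |w|_{a_j} ≡ q-1 (mod q) for all j}` over `Σ = {a_1, …, a_k}` are commutative
regular languages with product-form minimal automata, `sc U = p^k`, `sc V = q^k`,
their shuffle has a product-form minimal automaton, and `sc (U ⧢ V) = p^k · q^k`. -/
theorem stmt2 (k p q : ℕ) (hp : 0 < p) (hq : 0 < q) (hpq : Nat.Coprime p q) :
    let U : Set (List (Fin k)) := {w | ∀ j : Fin k, w.count j % p = p - 1}
    let V : Set (List (Fin k)) := {w | ∀ j : Fin k, w.count j % q = q - 1}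
    CommutativeLang U ∧ RegularLang U ∧ HasProductForm U ∧ sc U = p ^ k ∧
    CommutativeLang V ∧ RegularLang V ∧ HasProductForm V ∧ sc V = q ^ k ∧
    HasProductForm (shuffleLang U V) ∧ sc (shuffleLang U V) = p ^ k * q ^ k := by
  intro U V
  obtain ⟨hUreg, hUprod, hUsc⟩ := letterwiseLang_mod_regular_hasProductForm_sc (α := Fin k) hp
  obtain ⟨hVreg, hVprod, hVsc⟩ := letterwiseLang_mod_regular_hasProductForm_sc (α := Fin k) hq
  have hUV : shuffleLang U V = letterwiseLang _ :=
    shuffleLang_letterwiseLang (· % p = p - 1) (· % q = q - 1)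
  obtain ⟨-, hUVprod, hUVsc⟩ := letterwiseLang_regular_hasProductForm_sc_of_threshold
    (α := Fin k) (N := p * q - 1) (fun n => exists_mod_eq_sub_one_of_le hp hq hpq)
    fun hN => by
      rw [show p * q - 1 - 1 = p * q - 2 by omega]
      exact not_exists_mod_eq_sub_one hp hq hpq (by omega)
  rw [Fintype.card_fin] at hUsc hVsc hUVsc
  refine ⟨commutativeLang_letterwiseLang (· % p = p - 1), hUreg, hUprod, hUsc,
    commutativeLang_letterwiseLang (· % q = q - 1), hVreg, hVprod, hVsc, hUV ▸ hUVprod, ?_⟩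
  rw [hUV, hUVsc, Nat.sub_add_cancel (Nat.mul_pos hp hq), mul_pow]
end

section
/- Let U ⊆ Σ* be a commutative regular language with a product-form minimal automaton and sc(U) = n. Then each of the four languages ↑U (upward closure), ↓U (downward closure), the upward interior Σ* ∖ ↓(Σ* ∖ U), and the downward interior Σ* ∖ ↑(Σ* ∖ U) is regular with state complexity at most n. -/
/-!
Product form makes the Nerode class of a word `u` the tuple of the classes of its blocks
`a ^ |u|_a`, and each sequence `k ↦ [a ^ k]` is a lasso with `m a + p a` distinct classes, so
`sc U ≥ ∏ a, (m a + p a)`. Whether `u x` lies in `↑U` (resp. `↓U`) depends only on the counts of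
`u` truncated at `m a + p a - 1` (resp. `m a`): the count of `a` in a witness can be reduced
below `m a + p a` (resp. pumped up by multiples of `p a`) without leaving its Nerode class.
Hence `↑U` and `↓U` have at most `∏ a, (m a + p a)` classes. The interiors are complements of
closures of `Uᶜ`, which has the same Nerode congruence as `U`.
-/

def upwardClosure {α : Type*} (M : Set (List α)) : Set (List α) :=
  {u | ∃ v ∈ M, v.Sublist u}

def downwardClosure {α : Type*} (M : Set (List α)) : Set (List α) :=
  {u | ∃ v ∈ M, u.Sublist v}

section Nerode

variable {α : Type*} {L : Set (List α)} {u v w : List α}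

theorem NerodeEq.refl (L : Set (List α)) (u : List α) : NerodeEq L u u := fun _ => Iff.rfl

theorem NerodeEq.symm (h : NerodeEq L u v) : NerodeEq L v u := fun x => (h x).symm

theorem NerodeEq.replicate_add {a : α} {i j : ℕ}
    (h : NerodeEq L (List.replicate i a) (List.replicate j a)) (t : ℕ) :
    NerodeEq L (List.replicate (i + t) a) (List.replicate (j + t) a) := by
  simpa only [List.replicate_add] using h.append_right (List.replicate t a)

theorem nerodeEq_compl_iff : NerodeEq Lᶜ u v ↔ NerodeEq L u v :=
  forall_congr' fun _ => not_iff_not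

theorem nerodeSetoid_compl (L : Set (List α)) : nerodeSetoid Lᶜ = nerodeSetoid L :=
  Setoid.ext fun _ _ => nerodeEq_compl_iff

theorem regularLang_compl_iff : RegularLang Lᶜ ↔ RegularLang L := by
  rw [RegularLang, RegularLang, nerodeSetoid_compl]

theorem sc_compl (L : Set (List α)) : sc Lᶜ = sc L := by
  rw [sc, sc, nerodeSetoid_compl]

end Nerode

section Lasso

variable {α : Type*} {L : Set (List α)} {a : α} {m p : ℕ}

theorem RegularLang.exists_replicate_lasso (hr : RegularLang L) (a : α) :
    ∃ m p : ℕ, 0 < p ∧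
      NerodeEq L (List.replicate m a) (List.replicate (m + p) a) ∧
      ∀ i j : ℕ, i < m + p → j < m + p →
        NerodeEq L (List.replicate i a) (List.replicate j a) → i = j := by
  have hex : ∃ j i : ℕ, i < j ∧ NerodeEq L (List.replicate i a) (List.replicate j a) := by
    have : Finite (Quotient (nerodeSetoid L)) := hr
    obtain ⟨x, y, hxy, hxy'⟩ := Finite.exists_ne_map_eq_of_infinite
      fun i => Quotient.mk (nerodeSetoid L) (List.replicate i a)
    rcases hxy.lt_or_gt with h | h
    · exact ⟨y, x, h, Quotient.exact hxy'⟩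
    · exact ⟨x, y, h, Quotient.exact hxy'.symm⟩
  classical
  obtain ⟨m, hm, hmN⟩ := Nat.find_spec hex
  refine ⟨m, Nat.find hex - m, by omega, by rwa [Nat.add_sub_cancel' hm.le], ?_⟩
  intro i j hi hj hij
  by_contra hne
  rw [Nat.add_sub_cancel' hm.le] at hi hj
  rcases Nat.lt_or_gt_of_ne hne with h | h
  · exact Nat.find_min hex hj ⟨i, h, hij⟩
  · exact Nat.find_min hex hi ⟨j, h, hij.symm⟩

theorem nerodeEq_replicate_add_mul
    (hmp : NerodeEq L (List.replicate m a) (List.replicate (m + p) a))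
    {i : ℕ} (hi : m ≤ i) (k : ℕ) :
    NerodeEq L (List.replicate i a) (List.replicate (i + k * p) a) := by
  induction k with
  | zero => simpa using NerodeEq.refl L _
  | succ k ih =>
    have hstep := hmp.replicate_add (i + k * p - m)
    rw [show m + (i + k * p - m) = i + k * p by omega,
      show m + p + (i + k * p - m) = i + (k + 1) * p by rw [Nat.succ_mul]; omega] at hstep
    exact ih.trans hstep

theorem exists_le_lt_nerodeEq_replicate (hp : 0 < p)
    (hmp : NerodeEq L (List.replicate m a) (List.replicate (m + p) a)) (k : ℕ) :
    ∃ k' ≤ k, k' < m + p ∧ NerodeEq L (List.replicate k' a) (List.replicate k a) := by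
  induction k using Nat.strong_induction_on with
  | _ k ih =>
    by_cases hk : k < m + p
    · exact ⟨k, le_rfl, hk, NerodeEq.refl L _⟩
    obtain ⟨k', hk'k, hk', hk'eq⟩ := ih (k - p) (by omega)
    have hloop := nerodeEq_replicate_add_mul hmp (i := k - p) (by omega) 1
    rw [one_mul, Nat.sub_add_cancel (by omega)] at hloop
    exact ⟨k', by omega, hk', hk'eq.trans hloop⟩

end Lasso

namespace HasProductForm

variable {α : Type*} [DecidableEq α] {U : Set (List α)}

theorem commutativeLang (hp : HasProductForm U) : CommutativeLang U := fun u v h => by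
  simpa using (hp u v).2 (fun a => h a ▸ NerodeEq.refl U _) []

theorem compl (hp : HasProductForm U) : HasProductForm Uᶜ := fun u v => by
  simpa only [nerodeEq_compl_iff] using hp u v

end HasProductForm

section Counts

variable {α : Type*} [Fintype α] [DecidableEq α]

noncomputable def ofCounts (n : α → ℕ) : List α :=
  Finset.univ.toList.flatMap fun a => List.replicate (n a) a

theorem count_ofCounts (n : α → ℕ) (a : α) : (ofCounts n).count a = n a := by
  simp [ofCounts, List.count_flatMap, List.count_replicate, Function.comp_def]

theorem regularLang_and_sc_le_prod_of_min_eq {L : Set (List α)} (K : α → ℕ)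
    (h : ∀ u v : List α, (∀ a, min (u.count a) (K a) = min (v.count a) (K a)) →
      NerodeEq L u v) :
    RegularLang L ∧ sc L ≤ ∏ a, (K a + 1) := by
  let g : (∀ a, Fin (K a + 1)) → Quotient (nerodeSetoid L) :=
    fun k => Quotient.mk _ (ofCounts fun a => k a)
  have hg : Function.Surjective g := by
    rintro ⟨u⟩
    refine ⟨fun a => ⟨min (u.count a) (K a), by omega⟩, Quotient.sound (h _ _ fun a => ?_)⟩
    simp [count_ofCounts]
  refine ⟨Finite.of_surjective g hg, ?_⟩
  simpa [sc, Nat.card_pi] using Nat.card_le_card_of_surjective g hg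

end Counts

namespace HasProductForm

variable {α : Type*} [Fintype α] [DecidableEq α] {U : Set (List α)}

theorem nerodeEq_ofCounts (hp : HasProductForm U) {n n' : α → ℕ}
    (h : ∀ a, NerodeEq U (List.replicate (n a) a) (List.replicate (n' a) a)) :
    NerodeEq U (ofCounts n) (ofCounts n') :=
  (hp _ _).2 fun a => by simpa only [count_ofCounts] using h a

theorem ofCounts_mem_iff (hp : HasProductForm U) {n n' : α → ℕ}
    (h : ∀ a, NerodeEq U (List.replicate (n a) a) (List.replicate (n' a) a)) :
    ofCounts n ∈ U ↔ ofCounts n' ∈ U := by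
  simpa using hp.nerodeEq_ofCounts h []

theorem prod_le_sc (hp : HasProductForm U) (hr : RegularLang U) (N : α → ℕ)
    (hN : ∀ a, ∀ i j : ℕ, i < N a → j < N a →
      NerodeEq U (List.replicate i a) (List.replicate j a) → i = j) :
    ∏ a, N a ≤ sc U := by
  let g : (∀ a, Fin (N a)) → Quotient (nerodeSetoid U) :=
    fun k => Quotient.mk _ (ofCounts fun a => k a)
  have hg : Function.Injective g := fun k k' hkk' => funext fun a => by
    have h := (hp _ _).1 (Quotient.exact hkk') a
    simp only [count_ofCounts] at h
    exact Fin.ext (hN a _ _ (k a).2 (k' a).2 h)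
  have : Finite (Quotient (nerodeSetoid U)) := hr
  simpa [sc, Nat.card_pi] using Nat.card_le_card_of_injective g hg

theorem regularLang_and_sc_le_of_min_eq (hp : HasProductForm U) (hr : RegularLang U)
    {L : Set (List α)} {N K : α → ℕ}
    (hN : ∀ a, ∀ i j : ℕ, i < N a → j < N a →
      NerodeEq U (List.replicate i a) (List.replicate j a) → i = j)
    (hK : ∀ a, K a < N a)
    (h : ∀ u v : List α, (∀ a, min (u.count a) (K a) = min (v.count a) (K a)) →
      NerodeEq L u v) :
    RegularLang L ∧ sc L ≤ sc U := by
  obtain ⟨hreg, hsc⟩ := regularLang_and_sc_le_prod_of_min_eq K h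
  exact ⟨hreg, hsc.trans <| (Finset.prod_le_prod (fun _ _ => Nat.zero_le _)
    fun a _ => hK a).trans (hp.prod_le_sc hr N hN)⟩

end HasProductForm

namespace CommutativeLang

variable {α : Type*} [Fintype α] [DecidableEq α] {U : Set (List α)}

theorem mem_upwardClosure_iff (hc : CommutativeLang U) (w : List α) :
    w ∈ upwardClosure U ↔ ∃ s : α → ℕ, ofCounts s ∈ U ∧ ∀ a, s a ≤ w.count a := by
  constructor
  · rintro ⟨v, hv, hvw⟩
    exact ⟨fun a => v.count a, (hc _ _ (count_ofCounts _)).2 hv,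
      fun a => hvw.count_le a⟩
  · rintro ⟨s, hs, hsw⟩
    have hsub : (ofCounts s).Subperm w :=
      List.subperm_ext_iff.2 fun a _ => (count_ofCounts s a).trans_le (hsw a)
    obtain ⟨v, hv, hvw⟩ := hsub
    exact ⟨v, (hc _ _ hv.count_eq).2 hs, hvw⟩

theorem mem_downwardClosure_iff (hc : CommutativeLang U) (w : List α) :
    w ∈ downwardClosure U ↔ ∃ s : α → ℕ, ofCounts s ∈ U ∧ ∀ a, w.count a ≤ s a := by
  constructor
  · rintro ⟨v, hv, hwv⟩
    exact ⟨fun a => v.count a, (hc _ _ (count_ofCounts _)).2 hv,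
      fun a => hwv.count_le a⟩
  · rintro ⟨s, hs, hws⟩
    refine ⟨w ++ ofCounts (fun a => s a - w.count a), (hc _ _ fun a => ?_).2 hs,
      List.sublist_append_left _ _⟩
    rw [List.count_append, count_ofCounts, count_ofCounts]
    have := hws a
    omega

end CommutativeLang

namespace HasProductForm

variable {α : Type*} [Fintype α] [DecidableEq α] {U : Set (List α)} {m p : α → ℕ}

theorem mem_upwardClosure_append_of_min_eq (hp : HasProductForm U) (hp0 : ∀ a, 0 < p a)
    (hmp : ∀ a, NerodeEq U (List.replicate (m a) a) (List.replicate (m a + p a) a))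
    {u v x : List α}
    (huv : ∀ a, min (u.count a) (m a + p a - 1) = min (v.count a) (m a + p a - 1))
    (hux : u ++ x ∈ upwardClosure U) : v ++ x ∈ upwardClosure U := by
  rw [hp.commutativeLang.mem_upwardClosure_iff] at hux ⊢
  obtain ⟨s, hs, hsux⟩ := hux
  simp only [List.count_append] at hsux ⊢
  choose s' hs'_le hs'_lt hs'_equiv using
    fun a => exists_le_lt_nerodeEq_replicate (hp0 a) (hmp a) (s a)
  refine ⟨s', (hp.ofCounts_mem_iff hs'_equiv).2 hs, fun a => ?_⟩
  have := hsux a; have := hs'_le a; have := hs'_lt a; have := huv a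
  omega

theorem mem_downwardClosure_append_of_min_eq (hp : HasProductForm U) (hp0 : ∀ a, 0 < p a)
    (hmp : ∀ a, NerodeEq U (List.replicate (m a) a) (List.replicate (m a + p a) a))
    {u v x : List α} (huv : ∀ a, min (u.count a) (m a) = min (v.count a) (m a))
    (hux : u ++ x ∈ downwardClosure U) : v ++ x ∈ downwardClosure U := by
  rw [hp.commutativeLang.mem_downwardClosure_iff] at hux ⊢
  obtain ⟨s, hs, hsux⟩ := hux
  simp only [List.count_append] at hsux ⊢
  -- once the count of `a` in `u` has entered the loop, `s a` can be pumped above any bound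
  let s' : α → ℕ := fun a => if m a ≤ u.count a then s a + v.count a * p a else s a
  have hs'_equiv : ∀ a, NerodeEq U (List.replicate (s' a) a) (List.replicate (s a) a) := fun a => by
    by_cases h : m a ≤ u.count a
    · simpa only [s', if_pos h] using
        (nerodeEq_replicate_add_mul (hmp a) (by have := hsux a; omega) _).symm
    · simpa only [s', if_neg h] using NerodeEq.refl U _
  refine ⟨s', (hp.ofCounts_mem_iff hs'_equiv).2 hs, fun a => ?_⟩
  have := hsux a; have := huv a
  have := Nat.le_mul_of_pos_right (v.count a) (hp0 a)
  simp only [s']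
  split_ifs <;> omega

theorem regularLang_upwardClosure_and_sc_le (hp : HasProductForm U) (hr : RegularLang U) :
    RegularLang (upwardClosure U) ∧ sc (upwardClosure U) ≤ sc U := by
  choose m p hp0 hmp hinj using hr.exists_replicate_lasso
  refine hp.regularLang_and_sc_le_of_min_eq hr hinj (K := fun a => m a + p a - 1)
    (fun a => by have := hp0 a; omega) fun u v huv x => ⟨?_, ?_⟩
  · exact hp.mem_upwardClosure_append_of_min_eq hp0 hmp huv
  · exact hp.mem_upwardClosure_append_of_min_eq hp0 hmp fun a => (huv a).symm

theorem regularLang_downwardClosure_and_sc_le (hp : HasProductForm U) (hr : RegularLang U) :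
    RegularLang (downwardClosure U) ∧ sc (downwardClosure U) ≤ sc U := by
  choose m p hp0 hmp hinj using hr.exists_replicate_lasso
  refine hp.regularLang_and_sc_le_of_min_eq hr hinj (K := m)
    (fun a => by have := hp0 a; omega) fun u v huv x => ⟨?_, ?_⟩
  · exact hp.mem_downwardClosure_append_of_min_eq hp0 hmp huv
  · exact hp.mem_downwardClosure_append_of_min_eq hp0 hmp fun a => (huv a).symm

end HasProductForm

theorem stmt3_general {α : Type*} [Fintype α] [DecidableEq α] (U : Set (List α))
    (hr : RegularLang U) (hp : HasProductForm U) :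
    let up : Set (List α) → Set (List α) := fun M => {u | ∃ v ∈ M, v.Sublist u}
    let down : Set (List α) → Set (List α) := fun M => {u | ∃ v ∈ M, u.Sublist v}
    (RegularLang (up U) ∧ sc (up U) ≤ sc U) ∧
    (RegularLang (down U) ∧ sc (down U) ≤ sc U) ∧
    (RegularLang ((down Uᶜ)ᶜ) ∧ sc ((down Uᶜ)ᶜ) ≤ sc U) ∧
    (RegularLang ((up Uᶜ)ᶜ) ∧ sc ((up Uᶜ)ᶜ) ≤ sc U) := by
  intro up down
  have hrc : RegularLang Uᶜ := regularLang_compl_iff.2 hr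
  refine ⟨hp.regularLang_upwardClosure_and_sc_le hr,
    hp.regularLang_downwardClosure_and_sc_le hr, ?_, ?_⟩
  · rw [regularLang_compl_iff, sc_compl, ← sc_compl U]
    exact hp.compl.regularLang_downwardClosure_and_sc_le hrc
  · rw [regularLang_compl_iff, sc_compl, ← sc_compl U]
    exact hp.compl.regularLang_upwardClosure_and_sc_le hrc

/-- For a commutative regular language `U` with product-form minimal automaton and
`sc U = n`, the upward closure, downward closure, upward interior and downward interior
(with respect to the subsequence order) are regular with state complexity at most `n`. -/
theorem stmt3 {α : Type*} [Fintype α] [DecidableEq α] (U : Set (List α))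
    (hc : CommutativeLang U) (hr : RegularLang U) (hp : HasProductForm U) :
    let up : Set (List α) → Set (List α) := fun M => {u | ∃ v ∈ M, v.Sublist u}
    let down : Set (List α) → Set (List α) := fun M => {u | ∃ v ∈ M, u.Sublist v}
    (RegularLang (up U) ∧ sc (up U) ≤ sc U) ∧
    (RegularLang (down U) ∧ sc (down U) ≤ sc U) ∧
    (RegularLang ((down Uᶜ)ᶜ) ∧ sc ((down Uᶜ)ᶜ) ≤ sc U) ∧
    (RegularLang ((up Uᶜ)ᶜ) ∧ sc ((up Uᶜ)ᶜ) ≤ sc U) :=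
  stmt3_general U hr hp
end

section
/- Let Σ = {a_1,…,a_k} and let p, q be coprime positive integers. Define U = { w ∈ Σ* : |w|_{a_j} ≡ p−1 (mod p) for all j } and V = { w ∈ Σ* : |w|_{a_j} ≡ q−1 (mod q) for all j }. Then U and V are commutative regular languages with product-form minimal automata, the intersection U ∩ V has a product-form minimal automaton, and sc(U ∩ V) = sc(U)·sc(V) = p^k·q^k; hence the general bound n·m for the state complexity of intersection is attained on this class. -/
/-! ### Auxiliary -/

def Lmod (k n t : ℕ) : Set (List (Fin k)) := {w | ∀ j : Fin k, w.count j % n = t}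

def wordOf {k : ℕ} (m : Fin k → ℕ) : List (Fin k) :=
  (List.finRange k).flatMap fun j => List.replicate (m j) j

lemma count_wordOf {k : ℕ} (m : Fin k → ℕ) (i : Fin k) : (wordOf m).count i = m i := by
  have h : ∀ (l : List (Fin k)), (l.flatMap fun j => List.replicate (m j) j).count i
      = (l.map fun j => (List.replicate (m j) j).count i).sum := by
    intro l
    induction l with
    | nil => simp
    | cons x xs ih => simp [List.count_append, ih]
  rw [wordOf, h, ← Fin.sum_univ_def]
  simp [List.count_replicate]

lemma mem_Lmod {k n t : ℕ} (ht : t < n) (w : List (Fin k)) :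
    w ∈ Lmod k n t ↔ ∀ j, ((w.count j : ZMod n)) = (t : ZMod n) := by
  refine forall_congr' fun j => ?_
  rw [ZMod.natCast_eq_natCast_iff, Nat.ModEq, Nat.mod_eq_of_lt ht]

lemma nerode_Lmod {k n t : ℕ} (ht : t < n) (u v : List (Fin k)) :
    NerodeEq (Lmod k n t) u v ↔ ∀ j, ((u.count j : ZMod n)) = (v.count j : ZMod n) := by
  haveI : NeZero n := ⟨(Nat.pos_of_ne_zero (by omega)).ne'⟩
  constructor
  · intro h j
    by_contra hne
    set m : Fin k → ℕ := fun i => ((t : ZMod n) - (u.count i : ZMod n)).val with hm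
    have hcast : ∀ i, ((m i : ℕ) : ZMod n) = (t : ZMod n) - (u.count i : ZMod n) := by
      intro i; exact ZMod.natCast_rightInverse _
    have hu : u ++ wordOf m ∈ Lmod k n t := by
      rw [mem_Lmod ht]
      intro i
      rw [List.count_append, count_wordOf]
      push_cast
      rw [hcast]
      ring
    have hv := (h (wordOf m)).mp hu
    rw [mem_Lmod ht] at hv
    have := hv j
    rw [List.count_append, count_wordOf] at this
    push_cast at this
    rw [hcast] at this
    apply hne
    linear_combination -this
  · intro h x
    rw [mem_Lmod ht, mem_Lmod ht]
    refine forall_congr' fun j => ?_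
    rw [List.count_append, List.count_append]
    push_cast
    rw [h j]

noncomputable def LmodEquiv (k n t : ℕ) (ht : t < n) :
    Quotient (nerodeSetoid (Lmod k n t)) ≃ (Fin k → ZMod n) := by
  haveI : NeZero n := ⟨(Nat.pos_of_ne_zero (by omega)).ne'⟩
  exact
  { toFun := Quotient.lift (fun w => fun j => ((w.count j : ZMod n)))
      (fun u v h => funext fun j => (nerode_Lmod ht u v).mp h j)
    invFun := fun f => ⟦wordOf (fun j => (f j).val)⟧
    left_inv := by
      refine Quotient.ind fun w => ?_
      refine Quotient.sound ?_
      show NerodeEq _ _ _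
      rw [nerode_Lmod ht]
      intro j
      rw [count_wordOf]
      exact ZMod.natCast_rightInverse _
    right_inv := by
      intro f
      funext j
      show ((((wordOf fun j => (f j).val).count j : ℕ)) : ZMod n) = f j
      rw [count_wordOf]
      exact ZMod.natCast_rightInverse _ }

lemma bundle (k n t : ℕ) (ht : t < n) :
    CommutativeLang (Lmod k n t) ∧ RegularLang (Lmod k n t) ∧
      HasProductForm (Lmod k n t) ∧ sc (Lmod k n t) = n ^ k := by
  haveI : NeZero n := ⟨(Nat.pos_of_ne_zero (by omega)).ne'⟩
  refine ⟨?_, ?_, ?_, ?_⟩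
  · intro u v h
    exact forall_congr' fun j => by rw [h j]
  · exact Finite.of_equiv _ (LmodEquiv k n t ht).symm
  · intro u v
    rw [nerode_Lmod ht]
    constructor
    · intro h x
      rw [nerode_Lmod ht]
      intro j
      rcases eq_or_ne j x with rfl | hj
      · simpa [List.count_replicate] using h j
      · simp [List.count_replicate, Ne.symm hj]
    · intro h x
      have := (nerode_Lmod ht _ _).mp (h x) x
      simpa [List.count_replicate] using this
  · rw [sc, Nat.card_congr (LmodEquiv k n t ht), Nat.card_eq_fintype_card]
    simp [ZMod.card]

lemma crt_char (p q : ℕ) (hp : 0 < p) (hq : 0 < q) (hpq : Nat.Coprime p q) :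
    ∃ t < p * q, ∀ c : ℕ, (c % p = p - 1 ∧ c % q = q - 1) ↔ c % (p * q) = t := by
  obtain ⟨t0, ht0p, ht0q⟩ := Nat.chineseRemainder hpq (p - 1) (q - 1)
  refine ⟨t0 % (p * q), Nat.mod_lt _ (by positivity), fun c => ?_⟩
  have htp : t0 % (p * q) % p = p - 1 := by
    rw [Nat.mod_mod_of_dvd _ ⟨q, rfl⟩]
    simpa [Nat.ModEq, Nat.mod_eq_of_lt (by omega : p - 1 < p)] using ht0p
  have htq : t0 % (p * q) % q = q - 1 := by
    rw [Nat.mod_mod_of_dvd _ ⟨p, mul_comm p q⟩]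
    simpa [Nat.ModEq, Nat.mod_eq_of_lt (by omega : q - 1 < q)] using ht0q
  constructor
  · rintro ⟨hcp, hcq⟩
    have h1 : c ≡ t0 % (p * q) [MOD p] := by
      unfold Nat.ModEq
      rw [hcp, htp]
    have h2 : c ≡ t0 % (p * q) [MOD q] := by
      unfold Nat.ModEq
      rw [hcq, htq]
    have := (Nat.modEq_and_modEq_iff_modEq_mul hpq).mp ⟨h1, h2⟩
    simpa [Nat.ModEq, Nat.mod_mod_of_dvd _ (dvd_refl (p * q))] using this
  · intro hc
    constructor
    · rw [← Nat.mod_mod_of_dvd c (⟨q, rfl⟩ : p ∣ p * q), hc, htp]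
    · rw [← Nat.mod_mod_of_dvd c (⟨p, mul_comm p q⟩ : q ∣ p * q), hc, htq]

/-- For coprime `p, q > 0`, the languages `U = {w : |w|_{a_j} ≡ p-1 (mod p) for all j}` and
`V = {w : |w|_{a_j} ≡ q-1 (mod q) for all j}` over `Σ = {a_1, …, a_k}` are commutative
regular languages with product-form minimal automata, `U ∩ V` has a product-form
minimal automaton, and `sc (U ∩ V) = sc U * sc V = p^k * q^k`. -/
theorem stmt4 (k p q : ℕ) (hp : 0 < p) (hq : 0 < q) (hpq : Nat.Coprime p q) :
    let U : Set (List (Fin k)) := {w | ∀ j : Fin k, w.count j % p = p - 1}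
    let V : Set (List (Fin k)) := {w | ∀ j : Fin k, w.count j % q = q - 1}
    CommutativeLang U ∧ RegularLang U ∧ HasProductForm U ∧ sc U = p ^ k ∧
    CommutativeLang V ∧ RegularLang V ∧ HasProductForm V ∧ sc V = q ^ k ∧
    HasProductForm (U ∩ V) ∧ sc (U ∩ V) = sc U * sc V ∧ sc (U ∩ V) = p ^ k * q ^ k := by
  intro U V
  have hU : U = Lmod k p (p - 1) := rfl
  have hV : V = Lmod k q (q - 1) := rfl
  obtain ⟨t, htlt, htc⟩ := crt_char p q hp hq hpq
  have hUV : U ∩ V = Lmod k (p * q) t := by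
    ext w
    constructor
    · rintro ⟨h1, h2⟩ j
      exact (htc _).mp ⟨h1 j, h2 j⟩
    · intro h
      exact ⟨fun j => ((htc _).mpr (h j)).1, fun j => ((htc _).mpr (h j)).2⟩
  obtain ⟨cU, rU, pU, sU⟩ := bundle k p (p - 1) (by omega)
  obtain ⟨cV, rV, pV, sV⟩ := bundle k q (q - 1) (by omega)
  obtain ⟨cI, rI, pI, sI⟩ := bundle k (p * q) t htlt
  rw [hU, hV] at hUV ⊢
  rw [hUV]
  refine ⟨cU, rU, pU, sU, cV, rV, pV, sV, pI, ?_, ?_⟩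
  · rw [sI, sU, sV, mul_pow]
  · rw [sI, mul_pow]
end

section
/- The class of commutative regular languages with product-form minimal automata is closed under quotients: if L ⊆ Σ* is a commutative regular language with a product-form minimal automaton and u ∈ Σ*, then the left quotient u⁻¹L = { v ∈ Σ* : uv ∈ L } (which for commutative L equals the right quotient Lu⁻¹) is again a commutative regular language with a product-form minimal automaton. -/
lemma nerode_refl {α : Type*} (L : Set (List α)) (a : List α) : NerodeEq L a a :=
  fun _ => Iff.rfl

/-- The class of commutative regular languages with product-form minimal automata is
closed under quotients: the left quotient `u⁻¹L` (which equals the right quotient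
`Lu⁻¹` for commutative `L`) is again commutative, regular and of product-form. -/
theorem stmt5 {α : Type*} [DecidableEq α] (L : Set (List α)) (u : List α)
    (hc : CommutativeLang L) (hr : RegularLang L) (hp : HasProductForm L) :
    {v : List α | u ++ v ∈ L} = {v : List α | v ++ u ∈ L} ∧
    CommutativeLang {v : List α | u ++ v ∈ L} ∧
    RegularLang {v : List α | u ++ v ∈ L} ∧
    HasProductForm {v : List α | u ++ v ∈ L} := by
  set L' : Set (List α) := {v | u ++ v ∈ L} with hL'
  have key : ∀ a b : List α, NerodeEq L' a b ↔ NerodeEq L (u ++ a) (u ++ b) := by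
    intro a b
    constructor
    · intro h x
      simpa [L', Set.mem_setOf_eq, List.append_assoc] using h x
    · intro h x
      simpa [L', Set.mem_setOf_eq, List.append_assoc] using h x
  refine ⟨?_, ?_, ?_, ?_⟩
  · ext v
    simp only [Set.mem_setOf_eq]
    exact hc (u ++ v) (v ++ u) (fun x => by simp [List.count_append, Nat.add_comm])
  · intro a b hab
    exact hc (u ++ a) (u ++ b) (fun x => by simp [List.count_append, hab x])
  · have : Finite (Quotient (nerodeSetoid L)) := hr
    have inj : Function.Injective
        (Quotient.map (fun v => u ++ v) (fun a b h => (key a b).mp h) :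
          Quotient (nerodeSetoid L') → Quotient (nerodeSetoid L)) := by
      intro x y
      induction x using Quotient.ind with | _ a =>
      induction y using Quotient.ind with | _ b =>
      intro h
      exact Quotient.sound ((key a b).mpr (Quotient.exact h))
    exact Finite.of_injective _ inj
  · intro a b
    rw [key, hp]
    constructor
    · intro h x
      rw [key, hp]
      intro y
      by_cases hxy : x = y
      · subst hxy
        simpa [List.count_append, List.count_replicate] using h x
      · simp only [List.count_append, List.count_replicate, beq_iff_eq, if_neg hxy,
          Nat.add_zero]
        exact nerode_refl L _
    · intro h x
      have hx := (hp _ _).mp ((key _ _).mp (h x))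
      simpa [List.count_append, List.count_replicate] using hx x
end

section
/- The class of commutative regular languages with product-form minimal automata is not closed under intersection: over Σ = {a,b}, the languages U = { w ∈ Σ* : |w|_a = 1 } and V = { w ∈ Σ* : |w|_b = 1 } are commutative regular languages with product-form minimal automata, but U ∩ V = { w ∈ Σ* : |w|_a = 1 and |w|_b = 1 } does not have a product-form minimal automaton. -/
lemma nerode_one_iff (c : Fin 2) (u v : List (Fin 2)) :
    NerodeEq {w : List (Fin 2) | w.count c = 1} u v ↔
      min (u.count c) 2 = min (v.count c) 2 := by
  constructor
  · intro h
    have h1 := h []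
    have h2 := h [c]
    simp [Set.mem_setOf_eq, List.count_append] at h1 h2
    omega
  · intro h x
    simp only [Set.mem_setOf_eq, List.count_append]
    omega

lemma comm_one (c : Fin 2) : CommutativeLang {w : List (Fin 2) | w.count c = 1} := by
  intro u v h
  simp [Set.mem_setOf_eq, h c]

lemma reg_one (c : Fin 2) : RegularLang {w : List (Fin 2) | w.count c = 1} := by
  have hf : Function.Surjective
      (fun n : Fin 3 => (⟦List.replicate n c⟧ : Quotient (nerodeSetoid {w : List (Fin 2) | w.count c = 1}))) := by
    intro q
    induction q using Quotient.ind with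
    | _ u =>
      refine ⟨⟨min (u.count c) 2, by omega⟩, Quotient.sound ?_⟩
      show NerodeEq _ _ _
      rw [nerode_one_iff]
      simp [List.count_replicate]
  exact Finite.of_surjective _ hf

lemma pf_one (c : Fin 2) : HasProductForm {w : List (Fin 2) | w.count c = 1} := by
  intro u v
  rw [nerode_one_iff]
  constructor
  · intro h x
    rw [nerode_one_iff]
    simp only [List.count_replicate]
    split_ifs with hcx
    · rwa [eq_of_beq hcx]
    · rfl
  · intro h
    have := h c
    rw [nerode_one_iff] at this
    simpa [List.count_replicate] using this

lemma not_pf : ¬ HasProductForm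
    ({w : List (Fin 2) | w.count 0 = 1} ∩ {w : List (Fin 2) | w.count 1 = 1}) := by
  intro hpf
  have c00 : ([0,0] : List (Fin 2)).count 0 = 2 := by decide
  have c01 : ([0,0] : List (Fin 2)).count 1 = 0 := by decide
  have c10 : ([1,1] : List (Fin 2)).count 0 = 0 := by decide
  have c11 : ([1,1] : List (Fin 2)).count 1 = 2 := by decide
  have hlhs : NerodeEq ({w : List (Fin 2) | w.count 0 = 1} ∩ {w : List (Fin 2) | w.count 1 = 1})
      [0,0] [1,1] := by
    intro x
    simp only [Set.mem_inter_iff, Set.mem_setOf_eq, List.count_append, c00, c01, c10, c11]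
    omega
  have key := ((hpf [0,0] [1,1]).mp hlhs 0) [0,1]
  simp only [Set.mem_inter_iff, Set.mem_setOf_eq, c00, c10] at key
  exact absurd key (by decide)

/-- Non-closure under intersection: over `Σ = {a, b}` (encoded as `Fin 2` with `a = 0`,
`b = 1`), the languages `U = {w : |w|_a = 1}` and `V = {w : |w|_b = 1}` are commutative
regular languages with product-form minimal automata, but `U ∩ V` does not have a
product-form minimal automaton. -/
theorem stmt6 :
    let U : Set (List (Fin 2)) := {w | w.count 0 = 1}
    let V : Set (List (Fin 2)) := {w | w.count 1 = 1}
    CommutativeLang U ∧ RegularLang U ∧ HasProductForm U ∧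
    CommutativeLang V ∧ RegularLang V ∧ HasProductForm V ∧
    ¬ HasProductForm (U ∩ V) := by
  intro U V
  exact ⟨comm_one 0, reg_one 0, pf_one 0, comm_one 1, reg_one 1, pf_one 1, not_pf⟩
end

section
/- If L ⊆ Σ* is a nonempty commutative regular language with a product-form minimal automaton, then there is at most one letter x ∈ Σ such that the projection π_{{x}}(L) is a finite set. Consequently, for Γ ⊆ Σ with |Γ| ≥ 2, the projection π_Γ(L) is infinite; in particular no nonempty finite language over an at least binary alphabet has a product-form minimal automaton. -/
/-!
If two distinct letters `x ≠ y` both occurred only boundedly often in words of `L`, then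
`x^(m+1)` and `y^(n+1)` (for bounds `m`, `n`) would both be dead states, hence Nerode
equivalent. Product form compares them letter by letter: at `x` it gives
`x^(m+1) ≡_L x^0 = ε`, which is absurd since `ε` is live (`L` is nonempty).
-/

section

variable {α : Type*}

lemma nerodeEq_of_forall_append_not_mem {L : Set (List α)} {u v : List α}
    (hu : ∀ s, u ++ s ∉ L) (hv : ∀ s, v ++ s ∉ L) : NerodeEq L u v :=
  fun s => iff_of_false (hu s) (hv s)

variable [DecidableEq α]

lemma replicate_append_not_mem_of_count_le {L : Set (List α)} {x : α} {N : ℕ}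
    (hN : ∀ w ∈ L, w.count x ≤ N) (s : List α) : List.replicate (N + 1) x ++ s ∉ L := by
  intro hs
  have := hN _ hs
  rw [List.count_append, List.count_replicate_self] at this
  omega

lemma bddAbove_count_of_finite_image_filter {L : Set (List α)} {p : α → Prop}
    [DecidablePred p] (h : ((fun w : List α => w.filter (fun z => p z)) '' L).Finite)
    {x : α} (hx : p x) : BddAbove ((fun w : List α => w.count x) '' L) := by
  obtain ⟨N, hN⟩ := (h.image List.length).bddAbove
  refine ⟨N, ?_⟩
  rintro _ ⟨w, hw, rfl⟩
  calc w.count x = (w.filter (fun z => p z)).count x := (List.count_filter (by simpa)).symm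
    _ ≤ (w.filter (fun z => p z)).length := List.count_le_length
    _ ≤ N := hN ⟨_, ⟨w, hw, rfl⟩, rfl⟩

theorem HasProductForm.eq_of_bddAbove_count {L : Set (List α)} (hp : HasProductForm L)
    (hne : L.Nonempty) {x y : α} (hx : BddAbove ((fun w : List α => w.count x) '' L))
    (hy : BddAbove ((fun w : List α => w.count y) '' L)) : x = y := by
  by_contra hxy
  obtain ⟨m, hm⟩ := hx
  obtain ⟨n, hn⟩ := hy
  have hm' : ∀ w ∈ L, w.count x ≤ m := fun w hw => hm ⟨w, hw, rfl⟩
  have hn' : ∀ w ∈ L, w.count y ≤ n := fun w hw => hn ⟨w, hw, rfl⟩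
  have hdead : NerodeEq L (List.replicate (m + 1) x) (List.replicate (n + 1) y) :=
    nerodeEq_of_forall_append_not_mem (replicate_append_not_mem_of_count_le hm')
      (replicate_append_not_mem_of_count_le hn')
  have hx_eps : NerodeEq L (List.replicate (m + 1) x) [] := by
    simpa [List.count_replicate, Ne.symm hxy] using (hp _ _).mp hdead x
  obtain ⟨w, hw⟩ := hne
  exact replicate_append_not_mem_of_count_le hm' w ((hx_eps w).mpr hw)

end

theorem stmt8_general {α : Type*} [Fintype α] [DecidableEq α] (L : Set (List α))
    (hne : L.Nonempty) (hp : HasProductForm L) :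
    (∀ x y : α,
        ((fun w : List α => w.filter (fun z => z = x)) '' L).Finite →
        ((fun w : List α => w.filter (fun z => z = y)) '' L).Finite → x = y) ∧
    (∀ Γ : Finset α, 2 ≤ Γ.card →
        ((fun w : List α => w.filter (fun z => z ∈ Γ)) '' L).Infinite) ∧
    (2 ≤ Fintype.card α → L.Infinite) := by
  have projection_infinite : ∀ Γ : Finset α, 2 ≤ Γ.card →
      ((fun w : List α => w.filter (fun z => z ∈ Γ)) '' L).Infinite := by
    intro Γ hΓ hfin
    obtain ⟨x, hx, y, hy, hxy⟩ := Finset.one_lt_card.mp hΓ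
    exact hxy (hp.eq_of_bddAbove_count hne (bddAbove_count_of_finite_image_filter hfin hx)
      (bddAbove_count_of_finite_image_filter hfin hy))
  refine ⟨fun x y hx hy => ?_, projection_infinite, fun hcard hfin => ?_⟩
  · exact hp.eq_of_bddAbove_count hne (bddAbove_count_of_finite_image_filter hx rfl)
      (bddAbove_count_of_finite_image_filter hy rfl)
  · exact projection_infinite Finset.univ (by simpa using hcard) (hfin.image _)

/-- If `L` is a nonempty commutative regular language with a product-form minimal
automaton, then at most one letter has a finite one-letter projection; consequently
the projection to any subalphabet with at least two letters is infinite, and if the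
alphabet has at least two letters then `L` itself is infinite (so no nonempty finite
language over an at least binary alphabet has a product-form minimal automaton). -/
theorem stmt8 {α : Type*} [Fintype α] [DecidableEq α] (L : Set (List α))
    (hne : L.Nonempty) (hc : CommutativeLang L) (hr : RegularLang L)
    (hp : HasProductForm L) :
    (∀ x y : α,
        ((fun w : List α => w.filter (fun z => z = x)) '' L).Finite →
        ((fun w : List α => w.filter (fun z => z = y)) '' L).Finite → x = y) ∧
    (∀ Γ : Finset α, 2 ≤ Γ.card →
        ((fun w : List α => w.filter (fun z => z ∈ Γ)) '' L).Infinite) ∧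
    (2 ≤ Fintype.card α → L.Infinite) :=
  stmt8_general L hne hp
end

section
/- Let Σ = {a_1,…,a_k} and let L ⊆ Σ* be a commutative language. For w₀ ∈ Σ*, define U(w₀) = { w ∈ Σ* : π_j(w) ≡_L π_j(w₀) for all j ∈ {1,…,k} }. Then U(w₀) = π_1(U(w₀)) ⧢ π_2(U(w₀)) ⧢ ⋯ ⧢ π_k(U(w₀)), and L = ⋃_{w₀ ∈ L} U(w₀); that is, every commutative language is a union of shuffles of unary languages over the single letters. -/
/-- The iterated shuffle `L₁ ⧢ L₂ ⧢ ⋯ ⧢ Lₙ` of a list of languages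
(`{ε}` is the neutral element of the shuffle). -/
def shuffles {α : Type*} (Ls : List (Set (List α))) : Set (List α) :=
  Ls.foldr shuffleLang {[]}

section Aux
variable {α : Type*}

lemma IsShuffleOf.filter' (p : α → Bool) {u v w : List α}
    (h : IsShuffleOf u v w) : IsShuffleOf (u.filter p) (v.filter p) (w.filter p) := by
  induction h with
  | nil => simpa using IsShuffleOf.nil
  | @left u v w a h ih =>
    by_cases hpa : p a = true
    · simpa [List.filter_cons, hpa] using IsShuffleOf.left ih
    · simpa [List.filter_cons, hpa] using ih
  | @right u v w a h ih =>
    by_cases hpa : p a = true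
    · simpa [List.filter_cons, hpa] using IsShuffleOf.right ih
    · simpa [List.filter_cons, hpa] using ih

lemma shuffle_nil_right {u v w : List α} (h : IsShuffleOf u v w) (hv : v = []) : w = u := by
  induction h with
  | nil => rfl
  | left h ih => simp [ih hv]
  | right h ih => simp at hv

lemma shuffle_nil_left {u v w : List α} (h : IsShuffleOf u v w) (hu : u = []) : w = v := by
  induction h with
  | nil => rfl
  | left h ih => simp at hu
  | right h ih => simp [ih hu]

lemma IsShuffleOf.mem' {u v w : List α} (h : IsShuffleOf u v w) {x : α} (hx : x ∈ w) :
    x ∈ u ∨ x ∈ v := by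
  induction h with
  | nil => simp at hx
  | @left u v w a h ih =>
    rcases List.mem_cons.1 hx with rfl | hx
    · exact Or.inl (by simp)
    · rcases ih hx with h' | h'
      · exact Or.inl (by simp [h'])
      · exact Or.inr h'
  | @right u v w a h ih =>
    rcases List.mem_cons.1 hx with rfl | hx
    · exact Or.inr (by simp)
    · rcases ih hx with h' | h'
      · exact Or.inl h'
      · exact Or.inr (by simp [h'])

lemma shuffle_filter_split (p : α → Bool) (w : List α) :
    IsShuffleOf (w.filter p) (w.filter fun x => !p x) w := by
  induction w with
  | nil => simpa using IsShuffleOf.nil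
  | cons a w ih =>
    by_cases hpa : p a = true
    · simpa [List.filter_cons, hpa] using IsShuffleOf.left ih
    · simpa [List.filter_cons, hpa] using IsShuffleOf.right ih

end Aux

section Key
variable {k : ℕ}

lemma mem_shuffles (S : Fin k → Set (List (Fin k))) :
    ∀ js : List (Fin k), js.Nodup → ∀ w : List (Fin k),
      (∀ x ∈ w, x ∈ js) → (∀ j ∈ js, w.filter (fun x => x = j) ∈ S j) →
      w ∈ shuffles (js.map S) := by
  intro js
  induction js with
  | nil =>
    intro _ w hw _
    have : w = [] := by
      cases w with
      | nil => rfl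
      | cons a _ => exact absurd (hw a (by simp)) (by simp)
    simp [shuffles, this]
  | cons j rest ih =>
    intro hnd w hw hf
    refine ⟨w.filter (fun x => x = j), hf j (by simp),
      w.filter (fun x => !(decide (x = j))), ?_, ?_⟩
    · refine ih hnd.of_cons _ ?_ ?_
      · intro x hx
        rw [List.mem_filter] at hx
        rcases List.mem_cons.1 (hw x hx.1) with rfl | h
        · simpa using hx.2
        · exact h
      · intro j' hj'
        have hne : j' ≠ j := by
          rintro rfl; exact (List.nodup_cons.1 hnd).1 hj'
        have : (w.filter (fun x => !(decide (x = j)))).filter (fun x => x = j')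
            = w.filter (fun x => x = j') := by
          rw [List.filter_filter]
          refine List.filter_congr ?_
          intro a _
          by_cases h : a = j' <;> simp [h, hne]
        rw [this]
        exact hf j' (by simp [hj'])
    · exact shuffle_filter_split _ w

lemma shuffles_filter (S : Fin k → Set (List (Fin k)))
    (hS : ∀ j, ∀ u ∈ S j, ∀ x ∈ u, x = j) :
    ∀ js : List (Fin k), js.Nodup → ∀ w, w ∈ shuffles (js.map S) →
      (∀ j ∈ js, w.filter (fun x => x = j) ∈ S j) ∧ (∀ x ∈ w, x ∈ js) := by
  intro js
  induction js with
  | nil =>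
    intro _ w hw
    simp only [List.map_nil, shuffles, List.foldr_nil, Set.mem_singleton_iff] at hw
    subst hw; simp
  | cons j rest ih =>
    intro hnd w hw
    obtain ⟨u, hu, v, hv, hsh⟩ := hw
    obtain ⟨hrest, hlet⟩ := ih (List.nodup_cons.1 hnd).2 v hv
    have hulet : ∀ x ∈ u, x = j := hS j u hu
    constructor
    · intro j' hj'
      have hf := hsh.filter' (fun x => x = j')
      rcases List.mem_cons.1 hj' with rfl | hj'
      · have hv0 : v.filter (fun x => x = j') = [] := by
          rw [List.filter_eq_nil_iff]
          intro a ha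
          have := hlet a ha
          have hne : a ≠ j' := by
            rintro rfl; exact (List.nodup_cons.1 hnd).1 this
          simp [hne]
        have hu0 : u.filter (fun x => x = j') = u := by
          rw [List.filter_eq_self]
          intro a ha; simp [hulet a ha]
        rw [hv0, hu0] at hf
        rw [shuffle_nil_right hf rfl]
        exact hu
      · have hne : j ≠ j' := by
          rintro rfl; exact (List.nodup_cons.1 hnd).1 hj'
        have hu0 : u.filter (fun x => x = j') = [] := by
          rw [List.filter_eq_nil_iff]
          intro a ha
          have := hulet a ha
          simp [this, hne]
        rw [hu0] at hf
        rw [shuffle_nil_left hf rfl]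
        exact hrest j' hj'
    · intro x hx
      rcases hsh.mem' hx with h | h
      · simp [hulet x h]
      · simp [hlet x h]

lemma nerode_join {L : Set (List (Fin k))} (hc : CommutativeLang L) :
    ∀ {us vs : List (List (Fin k))}, List.Forall₂ (NerodeEq L) us vs →
      NerodeEq L us.flatten vs.flatten := by
  intro us vs h
  induction h with
  | nil => intro x; exact Iff.rfl
  | @cons u v us vs h hs ih =>
    intro s
    have e1 : (u :: us).flatten ++ s = u ++ (us.flatten ++ s) := by
      simp [List.flatten_cons, List.append_assoc]
    have e2 : (v :: vs).flatten ++ s = v ++ (vs.flatten ++ s) := by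
      simp [List.flatten_cons, List.append_assoc]
    rw [e1, e2]
    calc u ++ (us.flatten ++ s) ∈ L ↔ v ++ (us.flatten ++ s) ∈ L := h _
      _ ↔ us.flatten ++ (v ++ s) ∈ L := hc _ _ (by intro x; simp [List.count_append]; omega)
      _ ↔ vs.flatten ++ (v ++ s) ∈ L := ih _
      _ ↔ v ++ (vs.flatten ++ s) ∈ L := hc _ _ (by intro x; simp [List.count_append]; omega)

lemma count_flatten_filter (w : List (Fin k)) (x : Fin k) :
    ((List.ofFn fun j => w.filter (fun y => y = j)).flatten).count x = w.count x := by
  rw [List.count_flatten, List.map_ofFn, List.sum_ofFn]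
  have : ∀ j : Fin k, (w.filter (fun y => y = j)).count x
      = if x = j then w.count x else 0 := by
    intro j
    by_cases h : x = j
    · subst h
      rw [List.count_filter (by simp)]
      simp
    · simp only [if_neg h]
      rw [List.count_eq_zero]
      intro hx
      rw [List.mem_filter] at hx
      exact h (by simpa using hx.2)
  simp only [Function.comp, this]
  simp
end Key


/-- Every commutative language is a union of shuffles of unary languages: for
`L ⊆ Σ*` commutative and `w₀ ∈ Σ*`, the language
`U(w₀) = {w : π_j(w) ≡_L π_j(w₀) for all j}` satisfies
`U(w₀) = π_1(U(w₀)) ⧢ ⋯ ⧢ π_k(U(w₀))`, and `L = ⋃_{w₀ ∈ L} U(w₀)`. -/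
theorem stmt9 (k : ℕ) (L : Set (List (Fin k))) (hc : CommutativeLang L) :
    let pj : Fin k → List (Fin k) → List (Fin k) := fun j w => w.filter (fun x => x = j)
    let U : List (Fin k) → Set (List (Fin k)) :=
      fun w₀ => {w | ∀ j : Fin k, NerodeEq L (pj j w) (pj j w₀)}
    (∀ w₀ : List (Fin k), U w₀ = shuffles (List.ofFn fun j => pj j '' U w₀)) ∧
    L = ⋃ w₀ ∈ L, U w₀ := by
  intro pj U
  constructor
  · intro w₀
    have hS : ∀ j : Fin k, ∀ u ∈ pj j '' U w₀, ∀ x ∈ u, x = j := by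
      rintro j u ⟨v, _, rfl⟩ x hx
      have : x ∈ v.filter (fun y => y = j) := hx
      rw [List.mem_filter] at this
      simpa using this.2
    apply Set.eq_of_subset_of_subset
    · intro w hw
      rw [List.ofFn_eq_map]
      exact mem_shuffles _ _ (List.nodup_finRange k) w (fun x _ => List.mem_finRange x)
        (fun j _ => ⟨w, hw, rfl⟩)
    · intro w hw
      rw [List.ofFn_eq_map] at hw
      obtain ⟨hfil, -⟩ := shuffles_filter _ hS _ (List.nodup_finRange k) w hw
      intro j
      obtain ⟨v, hv, heq⟩ := hfil j (List.mem_finRange j)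
      have h1 : NerodeEq L (pj j v) (pj j w₀) := hv j
      rw [heq] at h1
      exact h1
  · apply Set.eq_of_subset_of_subset
    · intro w hw
      exact Set.mem_biUnion hw (fun j x => Iff.rfl)
    · intro w hw
      rw [Set.mem_iUnion₂] at hw
      obtain ⟨w₀, hw₀, hw⟩ := hw
      have hF : List.Forall₂ (NerodeEq L) (List.ofFn fun j => pj j w)
          (List.ofFn fun j => pj j w₀) := by
        rw [List.ofFn_eq_map, List.ofFn_eq_map, List.forall₂_map_right_iff,
          List.forall₂_map_left_iff]
        exact List.forall₂_same.2 (fun j _ => hw j)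
      have hNer := nerode_join hc hF
      have h1 : (List.ofFn fun j => pj j w).flatten ∈ L ↔
          (List.ofFn fun j => pj j w₀).flatten ∈ L := by simpa using hNer []
      have h2 : w ∈ L ↔ (List.ofFn fun j => pj j w).flatten ∈ L :=
        hc _ _ (fun x => (count_flatten_filter w x).symm)
      have h3 : w₀ ∈ L ↔ (List.ofFn fun j => pj j w₀).flatten ∈ L :=
        hc _ _ (fun x => (count_flatten_filter w₀ x).symm)
      exact h2.2 (h1.2 (h3.1 hw₀))
end

section
/- Let Σ = {a_1,…,a_k} and, for each j ∈ {1,…,k}, let L_j ⊆ {a_j}* be a regular and infinite unary language. Then the shuffle L = L_1 ⧢ L_2 ⧢ ⋯ ⧢ L_k satisfies sc(L) = sc(L_1)·sc(L_2)·⋯·sc(L_k), where sc(L_j) is the state complexity of L_j over the alphabet {a_j}; moreover, L is a commutative regular language with a product-form minimal automaton. -/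
theorem IsShuffleOf.filter_eq {α : Type*} {u v w : List α} {p : α → Bool}
    (h : IsShuffleOf u v w) (hu : ∀ a ∈ u, p a) (hv : ∀ a ∈ v, p a = false) :
    w.filter p = u ∧ w.filter (fun a => !p a) = v := by
  induction h with
  | nil => exact ⟨rfl, rfl⟩
  | @left u v w a _ ih =>
    obtain ⟨hu', hv'⟩ := ih (fun b hb => hu b (List.mem_cons_of_mem a hb)) hv
    simp [hu a List.mem_cons_self, hu', hv']
  | @right u v w a _ ih =>
    obtain ⟨hu', hv'⟩ := ih hu (fun b hb => hv b (List.mem_cons_of_mem a hb))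
    simp [hv a List.mem_cons_self, hu', hv']

theorem isShuffleOf_filter {α : Type*} (p : α → Bool) (w : List α) :
    IsShuffleOf (w.filter p) (w.filter fun a => !p a) w := by
  induction w with
  | nil => exact IsShuffleOf.nil
  | cons a t ih =>
    cases h : p a
    · simpa [List.filter_cons, h] using IsShuffleOf.right ih
    · simpa [List.filter_cons, h] using IsShuffleOf.left ih

theorem mem_shuffleLang_iff_of_disjoint {α : Type*} {p : α → Bool} {U V : Set (List α)}
    (hU : ∀ u ∈ U, ∀ a ∈ u, p a) (hV : ∀ v ∈ V, ∀ a ∈ v, p a = false) {w : List α} :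
    w ∈ shuffleLang U V ↔ w.filter p ∈ U ∧ w.filter (fun a => !p a) ∈ V := by
  constructor
  · rintro ⟨u, hu, v, hv, h⟩
    obtain ⟨rfl, rfl⟩ := h.filter_eq (hU u hu) (hV v hv)
    exact ⟨hu, hv⟩
  · rintro ⟨hu, hv⟩
    exact ⟨_, hu, _, hv, isShuffleOf_filter p w⟩

theorem List.eq_replicate_length_unit (x : List Unit) : x = List.replicate x.length () :=
  List.eq_replicate_iff.2 ⟨rfl, fun _ _ => rfl⟩

theorem replicate_mem_image_map_const_iff {α : Type*} (B : Set (List Unit)) (j : α) (n : ℕ) :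
    List.replicate n j ∈ (fun u : List Unit => u.map fun _ => j) '' B ↔
      List.replicate n () ∈ B := by
  have hinj : Function.Injective (fun u : List Unit => u.map fun _ => j) :=
    List.map_injective_iff.2 fun _ _ _ => rfl
  rw [← hinj.mem_set_image, List.map_replicate]

section CountLang

variable {ι : Type*} [DecidableEq ι]

def countLang (A : ι → Set (List Unit)) : Set (List ι) :=
  {w | ∀ j, List.replicate (w.count j) () ∈ A j}

theorem mem_shuffles_map_iff (A : ι → Set (List Unit)) {s : List ι} (hs : s.Nodup)
    (w : List ι) :
    w ∈ shuffles (s.map fun j => (fun u : List Unit => u.map fun _ => j) '' A j) ↔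
      (∀ i ∈ w, i ∈ s) ∧ ∀ j ∈ s, List.replicate (w.count j) () ∈ A j := by
  induction s generalizing w with
  | nil =>
    simp only [shuffles, List.map_nil, List.foldr_nil, Set.mem_singleton_iff]
    simp [List.eq_nil_iff_forall_not_mem]
  | cons j t ih =>
    obtain ⟨hjt, ht⟩ := List.nodup_cons.1 hs
    have hU :
        ∀ u ∈ (fun u : List Unit => u.map fun _ => j) '' A j, ∀ a ∈ u, (a == j) = true := by
      rintro _ ⟨u, -, rfl⟩ a ha
      obtain ⟨_, -, rfl⟩ := List.mem_map.1 ha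
      exact beq_self_eq_true j
    have hV : ∀ v ∈ shuffles (t.map fun j => (fun u : List Unit => u.map fun _ => j) '' A j),
        ∀ a ∈ v, (a == j) = false := by
      intro v hv a ha
      exact beq_eq_false_iff_ne.2 fun h => hjt (h ▸ ((ih ht v).1 hv).1 a ha)
    refine (mem_shuffleLang_iff_of_disjoint hU hV).trans ?_
    have hmem : (∀ i ∈ w.filter fun a => !(a == j), i ∈ t) ↔ ∀ i ∈ w, i ∈ j :: t := by
      simp only [List.mem_filter, List.mem_cons, Bool.not_eq_true', beq_eq_false_iff_ne]
      exact forall_congr' fun i => by tauto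
    have hcount : (∀ i ∈ t, List.replicate ((w.filter fun a => !(a == j)).count i) () ∈ A i) ↔
        ∀ i ∈ t, List.replicate (w.count i) () ∈ A i :=
      forall₂_congr fun i hi => by
        rw [List.count_filter (by simpa using fun h : i = j => hjt (h ▸ hi))]
    rw [ih ht, List.filter_beq, replicate_mem_image_map_const_iff, hmem, hcount,
      List.forall_mem_cons]
    tauto

theorem shuffles_ofFn_eq_countLang {k : ℕ} (A : Fin k → Set (List Unit)) :
    shuffles (List.ofFn fun j => (fun u : List Unit => u.map fun _ => j) '' A j) =
      countLang A := by
  ext w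
  rw [List.ofFn_eq_map, mem_shuffles_map_iff A (List.nodup_finRange k)]
  simp [countLang]

theorem append_mem_countLang_iff (A : ι → Set (List Unit)) (u x : List ι) :
    u ++ x ∈ countLang A ↔ ∀ j, List.replicate (u.count j + x.count j) () ∈ A j := by
  simp only [countLang, Set.mem_ofPred_eq, List.count_append]

theorem countLang_commutative (A : ι → Set (List Unit)) : CommutativeLang (countLang A) :=
  fun u v h => forall_congr' fun j => by rw [h j]

theorem nerodeEq_replicate_unit_iff (B : Set (List Unit)) (m m' : ℕ) :
    NerodeEq B (List.replicate m ()) (List.replicate m' ()) ↔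
      ∀ n, List.replicate (m + n) () ∈ B ↔ List.replicate (m' + n) () ∈ B := by
  refine ⟨fun h n => ?_, fun h x => ?_⟩
  · simpa only [List.replicate_add] using h (List.replicate n ())
  · rw [List.eq_replicate_length_unit x, ← List.replicate_add, ← List.replicate_add]
    exact h x.length

theorem Set.Infinite.exists_ge_replicate_mem {B : Set (List Unit)} (hB : B.Infinite) (c : ℕ) :
    ∃ m, c ≤ m ∧ List.replicate m () ∈ B := by
  have hinj : Set.InjOn List.length B := fun x _ y _ hxy => by
    rw [List.eq_replicate_length_unit x, List.eq_replicate_length_unit y, hxy]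
  obtain ⟨_, ⟨x, hx, rfl⟩, hlt⟩ := (hB.image hinj).exists_gt c
  exact ⟨x.length, hlt.le, List.eq_replicate_length_unit x ▸ hx⟩

variable [Fintype ι]

theorem exists_count_eq_s11 (d : ι → ℕ) : ∃ x : List ι, ∀ i, x.count i = d i := by
  refine ⟨(∑ j, d j • {j} : Multiset ι).toList, fun i => ?_⟩
  rw [← Multiset.coe_count, Multiset.coe_toList, Multiset.count_sum']
  simp [Multiset.count_singleton]

variable {A : ι → Set (List Unit)}

theorem replicate_count_mem_of_nerodeEq (hinf : ∀ j, (A j).Infinite) {u v : List ι}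
    (h : NerodeEq (countLang A) u v) (j : ι) (n : ℕ)
    (hu : List.replicate (u.count j + n) () ∈ A j) :
    List.replicate (v.count j + n) () ∈ A j := by
  -- a suffix that tops up every letter `i ≠ j` to a length in `A i` leaves only letter `j` tested
  choose m hum hm using fun i => (hinf i).exists_ge_replicate_mem (u.count i)
  obtain ⟨x, hx⟩ := exists_count_eq_s11 fun i => if i = j then n else m i - u.count i
  have hux : u ++ x ∈ countLang A := by
    refine (append_mem_countLang_iff A u x).2 fun i => ?_
    rw [hx]
    split_ifs with hij
    · exact hij ▸ hu
    · rw [Nat.add_sub_cancel' (hum i)]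
      exact hm i
  simpa [hx] using (append_mem_countLang_iff A v x).1 ((h x).1 hux) j

theorem nerodeEq_countLang_iff (hinf : ∀ j, (A j).Infinite) (u v : List ι) :
    NerodeEq (countLang A) u v ↔
      ∀ j, NerodeEq (A j) (List.replicate (u.count j) ()) (List.replicate (v.count j) ()) := by
  simp only [nerodeEq_replicate_unit_iff]
  refine ⟨fun h j n => ⟨replicate_count_mem_of_nerodeEq hinf h j n,
    replicate_count_mem_of_nerodeEq hinf (fun x => (h x).symm) j n⟩, fun h x => ?_⟩
  rw [append_mem_countLang_iff, append_mem_countLang_iff]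
  exact forall_congr' fun j => h j (x.count j)

theorem nerodeEq_countLang_replicate_iff (hinf : ∀ j, (A j).Infinite) (i : ι) (a b : ℕ) :
    NerodeEq (countLang A) (List.replicate a i) (List.replicate b i) ↔
      NerodeEq (A i) (List.replicate a ()) (List.replicate b ()) := by
  rw [nerodeEq_countLang_iff hinf]
  refine ⟨fun h => by simpa using h i, fun h j => ?_⟩
  by_cases hij : i = j
  · subst hij
    simpa using h
  · simp only [List.count_replicate, beq_iff_eq, hij, if_false]
    exact fun _ => Iff.rfl

theorem countLang_hasProductForm (hinf : ∀ j, (A j).Infinite) :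
    HasProductForm (countLang A) := fun u v => by
  simp only [nerodeEq_countLang_replicate_iff hinf, nerodeEq_countLang_iff hinf]

noncomputable def nerodeQuotientCountLangEquiv (hinf : ∀ j, (A j).Infinite) :
    Quotient (nerodeSetoid (countLang A)) ≃ ∀ j, Quotient (nerodeSetoid (A j)) :=
  Equiv.ofBijective
    (Quotient.lift (fun w j => ⟦List.replicate (w.count j) ()⟧) fun u v h =>
      funext fun j => Quotient.sound ((nerodeEq_countLang_iff hinf u v).1 h j))
    ⟨fun a b => Quotient.inductionOn₂ a b fun u v h =>
      Quotient.sound ((nerodeEq_countLang_iff hinf u v).2 fun j => Quotient.exact (congrFun h j)),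
    fun g => by
      obtain ⟨x, hx⟩ := exists_count_eq_s11 fun j => (g j).out.length
      refine ⟨⟦x⟧, funext fun j => ?_⟩
      change ⟦List.replicate (x.count j) ()⟧ = g j
      rw [hx, ← List.eq_replicate_length_unit, Quotient.out_eq]⟩

end CountLang

/-- If, for each `j`, `L_j ⊆ {a_j}*` is an infinite regular unary language (encoded by a
language `A j` over the unary alphabet `Unit` embedded into `Σ = {a_1, …, a_k}`), then the
shuffle `L = L_1 ⧢ ⋯ ⧢ L_k` satisfies `sc L = ∏_j sc(L_j)` (where `sc(L_j)` is the state
complexity over the unary alphabet) and `L` is a commutative regular language with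
a product-form minimal automaton. -/
theorem stmt11 (k : ℕ) (A : Fin k → Set (List Unit))
    (hreg : ∀ j, RegularLang (A j)) (hinf : ∀ j, (A j).Infinite) :
    let Lj : Fin k → Set (List (Fin k)) :=
      fun j => (fun w : List Unit => w.map (fun _ => j)) '' A j
    let L : Set (List (Fin k)) := shuffles (List.ofFn Lj)
    sc L = ∏ j : Fin k, sc (A j) ∧
    CommutativeLang L ∧ RegularLang L ∧ HasProductForm L := by
  intro Lj L
  have hL : L = countLang A := shuffles_ofFn_eq_countLang A
  have e := nerodeQuotientCountLangEquiv hinf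
  have : ∀ j, Finite (Quotient (nerodeSetoid (A j))) := hreg
  rw [hL]
  refine ⟨?_, countLang_commutative A, Finite.of_equiv _ e.symm, countLang_hasProductForm hinf⟩
  rw [sc, Nat.card_congr e, Nat.card_pi]
  rfl
end

section
/- Let Σ = Σ_1 ∪ ⋯ ∪ Σ_k be a partition of the alphabet into pairwise disjoint nonempty blocks and let L ⊆ Σ* be any language. Then L is closed under the associated partial commutation if and only if L = { w ∈ Σ* : ∃u ∈ L such that π_{Σ_i}(w) ≡_L π_{Σ_i}(u) for all i ∈ {1,…,k} }. (The inclusion of L in the right-hand set and the closure of the right-hand set under the partial commutation hold for every L.) -/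
/-- With a partition of the alphabet encoded by a coloring `c : α → Fin k`
(block `Σ_i = c⁻¹(i)`), `projC c i w` is the projection `π_{Σ_i}(w)`. -/
def projC {α : Type*} {k : ℕ} (c : α → Fin k) (i : Fin k) (w : List α) : List α :=
  w.filter (fun x => c x = i)

/-- `L` is closed under the partial commutation associated with the partition
encoded by `c : α → Fin k`: letters in distinct blocks commute. -/
def PartialCommClosed {α : Type*} {k : ℕ} (c : α → Fin k) (L : Set (List α)) : Prop :=
  ∀ x y : α, c x ≠ c y → ∀ u v : List α,
    (u ++ x :: y :: v ∈ L ↔ u ++ y :: x :: v ∈ L)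

section AuxStmt12
variable {α : Type*} {k : ℕ} (c : α → Fin k)

theorem aux_projC_append (i : Fin k) (u v : List α) :
    projC c i (u ++ v) = projC c i u ++ projC c i v := List.filter_append ..

theorem aux_projC_cons (i : Fin k) (a : α) (w : List α) :
    projC c i (a :: w) = if c a = i then a :: projC c i w else projC c i w := by
  simp only [projC, List.filter_cons]
  split_ifs with h h2 h3 <;> simp_all

theorem aux_projC_projC (i j : Fin k) (w : List α) :
    projC c j (projC c i w) = if i = j then projC c i w else [] := by
  induction w with
  | nil => simp [projC]
  | cons a t ih =>
    rw [aux_projC_cons]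
    split_ifs with h hij hij <;> simp_all [aux_projC_cons]

theorem aux_projC_eq_nil (p : List α) (i : Fin k) (h : ∀ x ∈ p, c x ≠ i) : projC c i p = [] := by
  induction p with
  | nil => rfl
  | cons a t ih =>
    rw [aux_projC_cons]
    rw [if_neg (h a (by simp))]
    exact ih (fun x hx => h x (by simp [hx]))

theorem aux_eq_nil_of_projC (w : List α) (h : ∀ i, projC c i w = []) : w = [] := by
  cases w with
  | nil => rfl
  | cons a t => have := h (c a); rw [aux_projC_cons, if_pos rfl] at this; simp at this

theorem aux_projC_decomp (i : Fin k) :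
    ∀ (w' : List α) (a : α) (r : List α), projC c i w' = a :: r →
      ∃ p s, w' = p ++ a :: s ∧ (∀ x ∈ p, c x ≠ i) ∧ projC c i s = r ∧ c a = i := by
  intro w'
  induction w' with
  | nil => intro a r h; simp [projC] at h
  | cons b t ih =>
    intro a r h
    rw [aux_projC_cons] at h
    by_cases hb : c b = i
    · rw [if_pos hb] at h
      injection h with h1 h2
      subst h1; subst h2
      exact ⟨[], t, rfl, by simp, rfl, hb⟩
    · rw [if_neg hb] at h
      obtain ⟨p, s, rfl, hp, hs, ha⟩ := ih a r h
      exact ⟨b :: p, s, rfl, by simpa [hb] using hp, hs, ha⟩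

theorem aux_swapC {L : Set (List α)} (hL : PartialCommClosed c L) (a : α) :
    ∀ (p : List α), (∀ x ∈ p, c x ≠ c a) → ∀ (q s : List α),
      (q ++ (p ++ a :: s) ∈ L ↔ q ++ (a :: (p ++ s)) ∈ L) := by
  intro p
  induction p with
  | nil => intro _ q s; rfl
  | cons b p' ih =>
    intro hp q s
    have hb : c b ≠ c a := hp b (by simp)
    have step1 : q ++ ((b :: p') ++ a :: s) ∈ L ↔ (q ++ [b]) ++ (p' ++ a :: s) ∈ L := by
      simp
    rw [step1, ih (fun x hx => hp x (by simp [hx])) (q ++ [b]) s]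
    have : (q ++ [b]) ++ (a :: (p' ++ s)) = q ++ b :: a :: (p' ++ s) := by simp
    rw [this, hL b a hb q (p' ++ s)]
    simp

theorem aux_traceA {L : Set (List α)} (hL : PartialCommClosed c L) :
    ∀ (w w' : List α), (∀ i, projC c i w = projC c i w') → ∀ q,
      (q ++ w ∈ L ↔ q ++ w' ∈ L) := by
  intro w
  induction w with
  | nil =>
    intro w' h q
    rw [aux_eq_nil_of_projC c w' (fun i => (h i).symm)]
  | cons a t ih =>
    intro w' h q
    have ha := h (c a)
    rw [aux_projC_cons, if_pos rfl] at ha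
    obtain ⟨p, s, rfl, hp, hs, _⟩ := aux_projC_decomp c (c a) w' a _ ha.symm
    have hproj : ∀ j, projC c j t = projC c j (p ++ s) := by
      intro j
      by_cases hj : j = c a
      · subst hj
        rw [aux_projC_append, aux_projC_eq_nil c p (c a) hp, List.nil_append, hs]
      · have := h j
        rw [aux_projC_cons, if_neg (fun hc => hj hc.symm)] at this
        rw [this, aux_projC_append, aux_projC_append]
        rw [aux_projC_cons, if_neg (fun hc => hj hc.symm)]
    have e1 : q ++ a :: t ∈ L ↔ (q ++ [a]) ++ (p ++ s) ∈ L := by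
      have := ih (p ++ s) hproj (q ++ [a])
      simpa using this
    rw [e1]
    have e2 := aux_swapC c hL a p hp q s
    have : (q ++ [a]) ++ (p ++ s) = q ++ (a :: (p ++ s)) := by simp
    rw [this, ← e2]

theorem aux_aux_projC_join_nil (j : Fin k) (w : List α) :
    ∀ (is : List (Fin k)), j ∉ is →
      projC c j ((is.map (fun i => projC c i w)).flatten) = [] := by
  intro is
  induction is with
  | nil => intro _; rfl
  | cons i is' ih =>
    intro hj
    simp only [List.map_cons, List.flatten_cons, aux_projC_append]
    rw [aux_projC_projC, if_neg (fun h => hj (by simp [h])),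
      ih (fun h => hj (List.mem_cons_of_mem i h))]
    rfl

theorem aux_projC_join (j : Fin k) (w : List α) :
    ∀ (is : List (Fin k)), is.Nodup → j ∈ is →
      projC c j ((is.map (fun i => projC c i w)).flatten) = projC c j w := by
  intro is
  induction is with
  | nil => intro _ h; simp at h
  | cons i is' ih =>
    intro hnd hj
    simp only [List.map_cons, List.flatten_cons, aux_projC_append]
    rw [aux_projC_projC]
    by_cases hij : i = j
    · subst hij
      rw [if_pos rfl, aux_aux_projC_join_nil c i w is' (List.nodup_cons.mp hnd).1, List.append_nil]
    · rw [if_neg hij, List.nil_append]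
      exact ih (List.nodup_cons.mp hnd).2 ((List.mem_cons.mp hj).resolve_left (fun h => hij h.symm))

theorem aux_chainE {L : Set (List α)} (hL : PartialCommClosed c L) (w u : List α)
    (h : ∀ i, NerodeEq L (projC c i w) (projC c i u)) :
    ∀ (is : List (Fin k)), is.Nodup → ∀ s : List α,
      ((is.map (fun i => projC c i w)).flatten ++ s ∈ L ↔
       (is.map (fun i => projC c i u)).flatten ++ s ∈ L) := by
  intro is
  induction is with
  | nil => intro _ s; rfl
  | cons i is' ih =>
    intro hnd s
    obtain ⟨hi, hnd'⟩ := List.nodup_cons.mp hnd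
    simp only [List.map_cons, List.flatten_cons, List.append_assoc]
    rw [h i ((is'.map (fun i => projC c i w)).flatten ++ s)]
    -- move projC c i u past the join of w-projections
    have move : ∀ (z : List α),
        projC c i u ++ ((is'.map (fun j => projC c j z)).flatten ++ s) ∈ L ↔
        (is'.map (fun j => projC c j z)).flatten ++ (projC c i u ++ s) ∈ L := by
      intro z
      have hpr : ∀ j, projC c j (projC c i u ++ ((is'.map (fun j => projC c j z)).flatten ++ s))
          = projC c j ((is'.map (fun j => projC c j z)).flatten ++ (projC c i u ++ s)) := by
        intro j
        simp only [aux_projC_append]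
        by_cases hij : i = j
        · subst hij
          rw [aux_aux_projC_join_nil c i z is' hi, aux_projC_projC, if_pos rfl]
          simp
        · rw [aux_projC_projC, if_neg hij]
          simp
      have := aux_traceA c hL _ _ hpr []
      simpa using this
    rw [move w, ih hnd' (projC c i u ++ s), ← move u]

end AuxStmt12

/-- A language `L` is closed under the partial commutation associated with the partition
`Σ = Σ_1 ∪ ⋯ ∪ Σ_k` iff `L = {w : ∃ u ∈ L, π_{Σ_i}(w) ≡_L π_{Σ_i}(u) for all i}`;
moreover, for every `L`, `L` is contained in this right-hand set and the right-hand
set is closed under the partial commutation. -/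
theorem stmt12 {α : Type*} {k : ℕ} (c : α → Fin k) (hsurj : Function.Surjective c)
    (L : Set (List α)) :
    (PartialCommClosed c L ↔
      L = {w : List α | ∃ u ∈ L, ∀ i : Fin k, NerodeEq L (projC c i w) (projC c i u)}) ∧
    L ⊆ {w : List α | ∃ u ∈ L, ∀ i : Fin k, NerodeEq L (projC c i w) (projC c i u)} ∧
    PartialCommClosed c
      {w : List α | ∃ u ∈ L, ∀ i : Fin k, NerodeEq L (projC c i w) (projC c i u)} := by
  have part2 : L ⊆ {w : List α | ∃ u ∈ L, ∀ i : Fin k, NerodeEq L (projC c i w) (projC c i u)} :=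
    fun w hw => ⟨w, hw, fun i x => Iff.rfl⟩
  have hproj2 : ∀ (x y : α), c x ≠ c y → ∀ (u v : List α) (i : Fin k),
      projC c i (u ++ x :: y :: v) = projC c i (u ++ y :: x :: v) := by
    intro x y hxy u v i
    simp only [aux_projC_append, aux_projC_cons]
    split_ifs with h1 h2 h2 <;> simp_all
  have part3 : PartialCommClosed c
      {w : List α | ∃ u ∈ L, ∀ i : Fin k, NerodeEq L (projC c i w) (projC c i u)} := by
    intro x y hxy u v
    simp only [Set.mem_setOf_eq]
    constructor
    · rintro ⟨u', hu', h⟩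
      exact ⟨u', hu', fun i => (hproj2 x y hxy u v i) ▸ h i⟩
    · rintro ⟨u', hu', h⟩
      exact ⟨u', hu', fun i => (hproj2 x y hxy u v i).symm ▸ h i⟩
  refine ⟨⟨fun hL => ?_, fun h => ?_⟩, part2, part3⟩
  · apply Set.Subset.antisymm part2
    rintro w ⟨u, huL, h⟩
    have hfin : (List.finRange k).Nodup := List.nodup_finRange k
    have hw : w ∈ L ↔ ((List.finRange k).map (fun i => projC c i w)).flatten ∈ L := by
      have := aux_traceA c hL w _
        (fun j => (aux_projC_join c j w (List.finRange k) hfin (List.mem_finRange j)).symm) []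
      simpa using this
    have hu : u ∈ L ↔ ((List.finRange k).map (fun i => projC c i u)).flatten ∈ L := by
      have := aux_traceA c hL u _
        (fun j => (aux_projC_join c j u (List.finRange k) hfin (List.mem_finRange j)).symm) []
      simpa using this
    have hWU := aux_chainE c hL w u h (List.finRange k) hfin []
    simp only [List.append_nil] at hWU
    exact hw.mpr (hWU.mpr (hu.mp huL))
  · rw [h]; exact part3
end

section
/- Let Σ = Σ_1 ∪ ⋯ ∪ Σ_k be a partition of the alphabet into pairwise disjoint nonempty blocks and let L ⊆ Σ* be closed under the associated partial commutation. Then for every word w ∈ Σ*: w ∈ L if and only if π_{Σ_1}(w)π_{Σ_2}(w)⋯π_{Σ_k}(w) ∈ L; moreover w ≡_L π_{Σ_1}(w)π_{Σ_2}(w)⋯π_{Σ_k}(w). -/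
/-!
Letters of distinct blocks commute in the syntactic (two-sided) congruence of `L`. Hence the
letters of any one block `Σ_i` can be moved, one at a time, to the front of a word without
leaving its syntactic class: `w` is syntactically equivalent to `π_{Σ_i}(w)` followed by the
remaining letters. Repeating this block by block shows `w` syntactically equivalent to
`π_{Σ_1}(w)⋯π_{Σ_k}(w)`; syntactic equivalence implies both membership equivalence and Nerode
equivalence.
-/

def SyntacticEq {α : Type*} (L : Set (List α)) (u v : List α) : Prop :=
  ∀ p s : List α, p ++ u ++ s ∈ L ↔ p ++ v ++ s ∈ L

namespace SyntacticEq

variable {α : Type*} {L : Set (List α)} {u v w u' v' : List α}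

theorem refl (u : List α) : SyntacticEq L u u := fun _ _ => Iff.rfl

theorem trans (h₁ : SyntacticEq L u v) (h₂ : SyntacticEq L v w) : SyntacticEq L u w :=
  fun p s => (h₁ p s).trans (h₂ p s)

instance : Trans (SyntacticEq L) (SyntacticEq L) (SyntacticEq L) := ⟨trans⟩

theorem append (h : SyntacticEq L u v) (h' : SyntacticEq L u' v') :
    SyntacticEq L (u ++ u') (v ++ v') := fun p s => by
  have h₁ := h p (u' ++ s)
  have h₂ := h' (p ++ v) s
  simp only [List.append_assoc] at h₁ h₂ ⊢
  exact h₁.trans h₂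

theorem nerodeEq (h : SyntacticEq L u v) : NerodeEq L u v := fun x => by
  simpa using h [] x

end SyntacticEq

section PartialCommutation

variable {α : Type*} {k : ℕ} {c : α → Fin k} {L : Set (List α)}

theorem PartialCommClosed.syntacticEq_swap (hL : PartialCommClosed c L) {x y : α}
    (hxy : c x ≠ c y) : SyntacticEq L [x, y] [y, x] := fun p s => by
  simpa using hL x y hxy p s

theorem PartialCommClosed.syntacticEq_cons_append_singleton (hL : PartialCommClosed c L)
    (a : α) : ∀ u : List α, (∀ b ∈ u, c b ≠ c a) → SyntacticEq L (a :: u) (u ++ [a])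
  | [], _ => .refl _
  | b :: t, hu =>
    calc SyntacticEq L ([a, b] ++ t) ([b, a] ++ t) :=
          (hL.syntacticEq_swap (hu b (by simp)).symm).append (.refl t)
      _ = [b] ++ (a :: t) := rfl
      SyntacticEq L _ ([b] ++ (t ++ [a])) := (SyntacticEq.refl [b]).append
          (hL.syntacticEq_cons_append_singleton a t fun x hx => hu x (by simp [hx]))

theorem PartialCommClosed.syntacticEq_projC_append_filter (hL : PartialCommClosed c L)
    (i : Fin k) : ∀ w : List α, SyntacticEq L w (projC c i w ++ w.filter (c · ≠ i))
  | [] => .refl _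
  | a :: t => by
    have ih := (SyntacticEq.refl [a]).append (hL.syntacticEq_projC_append_filter i t)
    by_cases ha : c a = i
    · simpa [projC, List.filter_cons, ha] using ih
    · set P := projC c i t
      set F := t.filter (c · ≠ i)
      have hP : ∀ b ∈ P, c b ≠ c a := fun b hb => by
        simp only [P, projC, List.mem_filter, decide_eq_true_eq] at hb
        exact hb.2 ▸ Ne.symm ha
      calc SyntacticEq L (a :: t) ((a :: P) ++ F) := ih
        SyntacticEq L _ ((P ++ [a]) ++ F) :=
            (hL.syntacticEq_cons_append_singleton a P hP).append (.refl F)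
        _ = projC c i (a :: t) ++ (a :: t).filter (c · ≠ i) := by
            simp [P, F, projC, ha]

theorem projC_filter_ne (c : α → Fin k) {i j : Fin k} (hji : j ≠ i) (w : List α) :
    projC c j (w.filter (c · ≠ i)) = projC c j w := by
  simp only [projC, List.filter_filter]
  congr 1
  ext x
  by_cases hx : c x = j <;> simp [hx, hji]

theorem PartialCommClosed.syntacticEq_flatMap_projC (hL : PartialCommClosed c L) :
    ∀ (is : List (Fin k)) (w : List α), is.Nodup → (∀ a ∈ w, c a ∈ is) →
      SyntacticEq L w (is.flatMap (projC c · w))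
  | [], [], _, _ => .refl _
  | [], a :: _, _, hw => absurd (hw a (by simp)) (by simp)
  | i :: is, w, hnd, hw => by
    obtain ⟨hi, hnd⟩ := List.nodup_cons.mp hnd
    have hF : ∀ a ∈ w.filter (c · ≠ i), c a ∈ is := fun a ha => by
      obtain ⟨haw, hai⟩ := List.mem_filter.mp ha
      simpa [of_decide_eq_true hai] using hw a haw
    calc SyntacticEq L w (projC c i w ++ w.filter (c · ≠ i)) :=
          hL.syntacticEq_projC_append_filter i w
      SyntacticEq L _ (projC c i w ++ is.flatMap (projC c · (w.filter (c · ≠ i)))) :=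
          (SyntacticEq.refl _).append (hL.syntacticEq_flatMap_projC is _ hnd hF)
      _ = (i :: is).flatMap (projC c · w) := by
          rw [List.flatMap_cons]
          congr 1
          exact List.flatMap_congr fun j hj => projC_filter_ne c (by rintro rfl; exact hi hj) w

end PartialCommutation

theorem stmt13_general {α : Type*} {k : ℕ} (c : α → Fin k)
    (L : Set (List α)) (hL : PartialCommClosed c L) (w : List α) :
    (w ∈ L ↔ (List.ofFn fun i : Fin k => projC c i w).flatten ∈ L) ∧
    NerodeEq L w (List.ofFn fun i : Fin k => projC c i w).flatten := by
  have h : SyntacticEq L w (List.ofFn fun i : Fin k => projC c i w).flatten := by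
    rw [List.ofFn_eq_map, ← List.flatMap_def]
    exact hL.syntacticEq_flatMap_projC _ w (List.nodup_finRange k) fun a _ => List.mem_finRange _
  exact ⟨by simpa using h.nerodeEq [], h.nerodeEq⟩

/-- If `L` is closed under the partial commutation associated with the partition
`Σ = Σ_1 ∪ ⋯ ∪ Σ_k`, then for every word `w`:
`w ∈ L ↔ π_{Σ_1}(w)π_{Σ_2}(w)⋯π_{Σ_k}(w) ∈ L`, and moreover
`w ≡_L π_{Σ_1}(w)π_{Σ_2}(w)⋯π_{Σ_k}(w)`. -/
theorem stmt13 {α : Type*} {k : ℕ} (c : α → Fin k) (hsurj : Function.Surjective c)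
    (L : Set (List α)) (hL : PartialCommClosed c L) (w : List α) :
    (w ∈ L ↔ (List.ofFn fun i : Fin k => projC c i w).flatten ∈ L) ∧
    NerodeEq L w (List.ofFn fun i : Fin k => projC c i w).flatten :=
  stmt13_general c L hL w
end
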